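/- arXiv:2007.06003 — 12 statements merged into one kernel-verified Lean document; each statement's English description precedes it below -/
import Mathlib

section
/- For every integer r ≥ 3 and integers n₁ ≥ n₂ ≥ ⋯ ≥ n_r ≥ 1, the anti-Ramsey number of the family {C₃, C₄} in the complete r-partite graph K_{n₁,n₂,…,n_r} equals n₁ + n₂ + ⋯ + n_r − 1; that is, the maximum number k such that there exists an edge-coloring of K_{n₁,…,n_r} using exactly k colors containing no rainbow 3-cycle and no rainbow 4-cycle is n₁ + n₂ + ⋯ + n_r − 1. -/
open Finset

/-- The complete `r`-partite graph with parts of sizes `n 0, n 1, …, n (r-1)`. -/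
def Kpartite (r : ℕ) (n : ℕ → ℕ) : SimpleGraph ((i : Fin r) × Fin (n i)) :=
  SimpleGraph.completeMultipartiteGraph fun i : Fin r => Fin (n i)

/-- The edge-coloring `c` contains a rainbow 3-cycle in `G`. -/
def RainbowC3 {V α : Type*} (G : SimpleGraph V) (c : Sym2 V → α) : Prop :=
  ∃ a b d : V, G.Adj a b ∧ G.Adj b d ∧ G.Adj d a ∧
    c s(a, b) ≠ c s(b, d) ∧ c s(b, d) ≠ c s(d, a) ∧ c s(a, b) ≠ c s(d, a)

/-- The edge-coloring `c` contains a rainbow 4-cycle in `G`. -/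
def RainbowC4 {V α : Type*} (G : SimpleGraph V) (c : Sym2 V → α) : Prop :=
  ∃ a b d e : V, G.Adj a b ∧ G.Adj b d ∧ G.Adj d e ∧ G.Adj e a ∧
    a ≠ d ∧ b ≠ e ∧
    c s(a, b) ≠ c s(b, d) ∧ c s(a, b) ≠ c s(d, e) ∧ c s(a, b) ≠ c s(e, a) ∧
    c s(b, d) ≠ c s(d, e) ∧ c s(b, d) ≠ c s(e, a) ∧ c s(d, e) ≠ c s(e, a)

/-- The coloring `c` uses every one of the `k` colors on at least one edge of `G`
(i.e. it uses exactly `k` colors). -/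
def SurjOnEdges {V : Type*} {k : ℕ} (G : SimpleGraph V) (c : Sym2 V → Fin k) : Prop :=
  ∀ i : Fin k, ∃ e ∈ G.edgeSet, c e = i

/-!
Lower bound: enumerate the `N` vertices so that the first two lie in different parts and colour
each edge by its later endpoint. Every vertex but the first has an earlier neighbour, so all
`N - 1` colours occur, while in any cycle the latest vertex meets two edges of the same colour.

Upper bound: with at least `N` colours, one edge of each colour gives at least `N` edges on `N`
vertices, hence a cycle, and it is rainbow. In a complete multipartite graph a rainbow cycle
`v₀ v₁ v₂ v₃ ⋯` of length at least 5 has the chord `v₀v₂` or `v₀v₃`, since `v₂` and `v₃` lie in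
different parts. The chord's colour occurs on at most one side of it, so the other side closed up
by the chord is a shorter rainbow cycle. Descending, one reaches a rainbow `C₃` or `C₄`.
-/

lemma Fintype.exists_equivFin_val_eq_zero_and_one {V : Type*} [Fintype V] {v₀ v₁ : V}
    (h : v₀ ≠ v₁) : ∃ F : V ≃ Fin (Fintype.card V), (F v₀ : ℕ) = 0 ∧ (F v₁ : ℕ) = 1 := by
  classical
  have hV : 1 < Fintype.card V := Fintype.one_lt_card_iff.2 ⟨v₀, v₁, h⟩
  let z : Fin (Fintype.card V) := ⟨0, by omega⟩
  let F₀ := (Fintype.equivFin V).trans (Equiv.swap (Fintype.equivFin V v₀) z)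
  have hF₀ : F₀ v₀ = z := by simp [F₀]
  have hF₀₁ : F₀ v₁ ≠ z := hF₀ ▸ F₀.injective.ne h.symm
  refine ⟨F₀.trans (Equiv.swap (F₀ v₁) ⟨1, hV⟩), ?_, by simp⟩
  rw [Equiv.trans_apply, hF₀, Equiv.swap_apply_of_ne_of_ne hF₀₁.symm (by simp [z, Fin.ext_iff])]

namespace SimpleGraph

variable {V α : Type*} {G : SimpleGraph V} {c : Sym2 V → α}

namespace Walk

def IsRainbow {u v : V} (c : Sym2 V → α) (p : G.Walk u v) : Prop :=
  (p.edges.map c).Nodup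

lemma isCycle_cons_and_isRainbow {u v : V} {p : G.Walk v u} (hp : p.IsPath)
    (hpc : p.IsRainbow c) (h : G.Adj u v) (hc : c s(u, v) ∉ p.edges.map c) :
    (cons h p).IsCycle ∧ (cons h p).IsRainbow c :=
  ⟨(cons_isCycle_iff p h).2 ⟨hp, fun he => hc (List.mem_map_of_mem he)⟩,
    List.nodup_cons.2 ⟨hc, hpc⟩⟩

lemma IsCycle.exists_shorter_isRainbow_of_adj_getVert {u : V} {p : G.Walk u u}
    (hp : p.IsCycle) (hpc : p.IsRainbow c) {j : ℕ} (hj : 2 ≤ j) (hjp : j + 2 ≤ p.length)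
    (h : G.Adj u (p.getVert j)) :
    ∃ (v : V) (q : G.Walk v v), q.IsCycle ∧ q.IsRainbow c ∧ q.length < p.length := by
  have hsplit : p.edges.map c = (p.take j).edges.map c ++ (p.drop j).edges.map c := by
    rw [← List.map_append, edges_take, edges_drop, List.take_append_drop]
  rw [IsRainbow, hsplit, List.nodup_append] at hpc
  obtain ⟨hpc₁, hpc₂, hdisj⟩ := hpc
  by_cases hcol : c s(u, p.getVert j) ∈ (p.take j).edges.map c
  · obtain ⟨hcyc, hrb⟩ := isCycle_cons_and_isRainbow (hp.isPath_drop (by omega)) hpc₂ h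
      (fun h' => hdisj _ hcol _ h' rfl)
    refine ⟨u, _, hcyc, hrb, ?_⟩
    simp only [length_cons, drop_length]
    omega
  · obtain ⟨hcyc, hrb⟩ := isCycle_cons_and_isRainbow (hp.isPath_take (by omega)) hpc₁ h.symm
      (by rwa [Sym2.eq_swap])
    refine ⟨_, _, hcyc, hrb, ?_⟩
    simp only [length_cons, take_length]
    omega

lemma IsRainbow.rainbowC3 {u : V} {p : G.Walk u u} (hpc : p.IsRainbow c) (hp : p.length = 3) :
    RainbowC3 G c := by
  rcases p with _ | ⟨h₁, _ | ⟨h₂, _ | ⟨h₃, _ | ⟨_, _⟩⟩⟩⟩ <;>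
    simp only [length_cons, length_nil, zero_add, Nat.reduceAdd, Nat.reduceEqDiff,
      OfNat.zero_ne_ofNat, OfNat.one_ne_ofNat] at hp
  simp only [IsRainbow, edges_cons, edges_nil, List.map_cons, List.map_nil, List.nodup_cons,
    List.mem_cons, List.nodup_nil] at hpc
  exact ⟨_, _, _, h₁, h₂, h₃, by tauto⟩

lemma IsRainbow.rainbowC4 {u : V} {p : G.Walk u u} (hpc : p.IsRainbow c) (hp : p.length = 4) :
    RainbowC4 G c := by
  rcases p with _ | ⟨h₁, _ | ⟨h₂, _ | ⟨h₃, _ | ⟨h₄, _ | ⟨_, _⟩⟩⟩⟩⟩ <;>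
    simp only [length_cons, length_nil, zero_add, Nat.reduceAdd, Nat.reduceEqDiff,
      OfNat.zero_ne_ofNat, OfNat.one_ne_ofNat] at hp
  simp only [IsRainbow, edges_cons, edges_nil, List.map_cons, List.map_nil, List.nodup_cons,
    List.mem_cons, List.nodup_nil] at hpc
  -- `a = d` or `b = e` would make the walk traverse an edge twice.
  refine ⟨_, _, _, _, h₁, h₂, h₃, h₄, ?_, ?_, by tauto⟩
  · rintro rfl
    exact hpc.1 (.inl (by rw [Sym2.eq_swap]))
  · rintro rfl
    exact hpc.1 (.inr (.inr (.inl (by rw [Sym2.eq_swap]))))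

end Walk

lemma IsAcyclic.card_edgeSet_lt [Finite V] [Nonempty V] (hG : G.IsAcyclic) :
    Nat.card G.edgeSet < Nat.card V := by
  obtain ⟨T, hGT, -, hT⟩ := connected_top.exists_isTree_le_of_le_of_isAcyclic le_top hG
  have hcardT := (isTree_iff_connected_and_card.1 hT).2
  have hGT' : Nat.card G.edgeSet ≤ Nat.card T.edgeSet :=
    Nat.card_mono (Set.toFinite _) (edgeSet_mono hGT)
  omega

lemma exists_isCycle_isRainbow_of_card_le [Finite V] [Nonempty V] {k : ℕ}
    {c : Sym2 V → Fin k} (hc : SurjOnEdges G c) (hk : Nat.card V ≤ k) :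
    ∃ (u : V) (p : G.Walk u u), p.IsCycle ∧ p.IsRainbow c := by
  choose g hgG hgc using hc
  have hg : g.Injective := fun i j h => by rw [← hgc i, ← hgc j, h]
  set H := fromEdgeSet (Set.range g)
  have hHG : H ≤ G := (fromEdgeSet_le G).2 fun _ he => by
    obtain ⟨i, rfl⟩ := he.1
    exact hgG i
  have hHE : H.edgeSet = Set.range g := by
    rw [edgeSet_fromEdgeSet, sdiff_eq_left, Set.disjoint_left]
    rintro _ ⟨i, rfl⟩
    exact G.not_isDiag_of_mem_edgeSet (hgG i)
  have hH : ¬ H.IsAcyclic := fun hH => by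
    have := hH.card_edgeSet_lt
    rw [hHE, Nat.card_range_of_injective hg, Nat.card_fin] at this
    omega
  obtain ⟨u, p, hp⟩ : ∃ (u : V) (p : H.Walk u u), p.IsCycle := by
    simpa [IsAcyclic] using hH
  refine ⟨u, p.mapLe hHG, hp.mapLe hHG, ?_⟩
  rw [Walk.IsRainbow, Walk.edges_mapLe_eq_edges]
  refine hp.edges_nodup.map_on fun e he e' he' hee' => ?_
  obtain ⟨i, rfl⟩ := hHE ▸ p.edges_subset_edgeSet he
  obtain ⟨j, rfl⟩ := hHE ▸ p.edges_subset_edgeSet he'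
  rw [hgc, hgc] at hee'
  rw [hee']

lemma not_rainbowC3_of_color_eq_of_lt (F : V → ℕ) (hF : F.Injective)
    (hc : ∀ x y z, F x < F y → F z < F y → c s(x, y) = c s(y, z)) : ¬ RainbowC3 G c := by
  rintro ⟨a, b, d, hab, hbd, hda, h₁, h₂, h₃⟩
  have := hF.ne hab.ne
  have := hF.ne hbd.ne
  have := hF.ne hda.ne
  obtain ⟨h, h'⟩ | ⟨h, h'⟩ | ⟨h, h'⟩ :
      (F a < F b ∧ F d < F b) ∨ (F b < F d ∧ F a < F d) ∨ (F d < F a ∧ F b < F a) := by omega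
  · exact h₁ (hc a b d h h')
  · exact h₂ (hc b d a h h')
  · exact h₃ (hc d a b h h').symm

lemma not_rainbowC4_of_color_eq_of_lt (F : V → ℕ) (hF : F.Injective)
    (hc : ∀ x y z, F x < F y → F z < F y → c s(x, y) = c s(y, z)) : ¬ RainbowC4 G c := by
  rintro ⟨a, b, d, e, hab, hbd, hde, hea, had, hbe, h₁, -, h₃, h₄, -, h₆⟩
  have := hF.ne hab.ne
  have := hF.ne hbd.ne
  have := hF.ne hde.ne
  have := hF.ne hea.ne
  have := hF.ne had
  have := hF.ne hbe
  obtain ⟨h, h'⟩ | ⟨h, h'⟩ | ⟨h, h'⟩ | ⟨h, h'⟩ :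
      (F a < F b ∧ F d < F b) ∨ (F b < F d ∧ F e < F d) ∨ (F d < F e ∧ F a < F e) ∨
        (F e < F a ∧ F b < F a) := by omega
  · exact h₁ (hc a b d h h')
  · exact h₄ (hc b d e h h')
  · exact h₆ (hc d e a h h')
  · exact h₃ (hc e a b h h').symm

lemma exists_coloring_of_equivFin [Fintype V] (F : V ≃ Fin (Fintype.card V))
    (hV : 2 ≤ Fintype.card V) (hF : ∀ w, (F w : ℕ) ≠ 0 → ∃ x, G.Adj x w ∧ (F x : ℕ) < F w) :
    ∃ c : Sym2 V → Fin (Fintype.card V - 1),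
      SurjOnEdges G c ∧ ¬ RainbowC3 G c ∧ ¬ RainbowC4 G c := by
  let c : Sym2 V → Fin (Fintype.card V - 1) :=
    Sym2.lift ⟨fun x y => ⟨max (F x : ℕ) (F y) - 1, by omega⟩,
      fun x y => Fin.ext (by simp only; rw [max_comm])⟩
  have hc : ∀ x y, (c s(x, y) : ℕ) = max (F x : ℕ) (F y) - 1 := fun _ _ => rfl
  have hcol : ∀ x y z, (F x : ℕ) < F y → (F z : ℕ) < F y → c s(x, y) = c s(y, z) :=
    fun x y z h h' => Fin.ext (by rw [hc, hc]; omega)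
  have hFinj : (fun v => (F v : ℕ)).Injective := Fin.val_injective.comp F.injective
  refine ⟨c, fun i => ?_, not_rainbowC3_of_color_eq_of_lt _ hFinj hcol,
    not_rainbowC4_of_color_eq_of_lt _ hFinj hcol⟩
  obtain ⟨x, hxw, hlt⟩ := hF (F.symm ⟨i + 1, by omega⟩) (by simp)
  refine ⟨s(x, F.symm ⟨i + 1, by omega⟩), hxw, Fin.ext ?_⟩
  rw [hc]
  simp only [Equiv.apply_symm_apply] at hlt ⊢
  omega

namespace completeMultipartiteGraph

variable {ι : Type*} {W : ι → Type*} {c : Sym2 (Σ i, W i) → α}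

lemma not_isRainbow_of_isCycle (h3 : ¬ RainbowC3 (completeMultipartiteGraph W) c)
    (h4 : ¬ RainbowC4 (completeMultipartiteGraph W) c) {u : Σ i, W i}
    (p : (completeMultipartiteGraph W).Walk u u) (hp : p.IsCycle) : ¬ p.IsRainbow c := by
  induction hlen : p.length using Nat.strong_induction_on generalizing u with
  | _ m ih =>
    intro hpc
    obtain hm | hm | hm : m = 3 ∨ m = 4 ∨ 5 ≤ m := by have := hp.three_le_length; omega
    · exact h3 (hpc.rainbowC3 (hlen.trans hm))
    · exact h4 (hpc.rainbowC4 (hlen.trans hm))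
    · have h23 := p.adj_getVert_succ (i := 2) (by omega)
      obtain ⟨j, hj, hjm, hadj⟩ : ∃ j, 2 ≤ j ∧ j + 2 ≤ m ∧
          (completeMultipartiteGraph W).Adj u (p.getVert j) := by
        simp only [comap_adj, top_adj] at h23 ⊢
        by_cases h2 : u.1 = (p.getVert 2).1
        · exact ⟨3, by omega, by omega, h2 ▸ h23⟩
        · exact ⟨2, le_rfl, by omega, h2⟩
      obtain ⟨v, q, hq, hqc, hqp⟩ :=
        hp.exists_shorter_isRainbow_of_adj_getVert hpc hj (hlen ▸ hjm) hadj
      exact ih _ (hlen ▸ hqp) q hq rfl hqc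

lemma exists_coloring [Fintype (Σ i, W i)] {v₀ v₁ : Σ i, W i} (h : v₀.1 ≠ v₁.1) :
    ∃ c : Sym2 (Σ i, W i) → Fin (Fintype.card (Σ i, W i) - 1),
      SurjOnEdges (completeMultipartiteGraph W) c ∧
        ¬ RainbowC3 (completeMultipartiteGraph W) c ∧
          ¬ RainbowC4 (completeMultipartiteGraph W) c := by
  have hne : v₀ ≠ v₁ := fun e => h (congrArg Sigma.fst e)
  obtain ⟨F, hF₀, hF₁⟩ := Fintype.exists_equivFin_val_eq_zero_and_one hne
  refine exists_coloring_of_equivFin F (Fintype.one_lt_card_iff.2 ⟨v₀, v₁, hne⟩) fun w hw => ?_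
  simp only [comap_adj, top_adj]
  by_cases hw₀ : v₀.1 = w.1
  · have hw₁ : (F w : ℕ) ≠ 1 := fun e =>
      h (hw₀.trans (congrArg Sigma.fst (F.injective (Fin.ext (e.trans hF₁.symm)))))
    exact ⟨v₁, fun e => h (hw₀.trans e.symm), by omega⟩
  · exact ⟨v₀, hw₀, by omega⟩

end completeMultipartiteGraph

end SimpleGraph

theorem antiRamsey_C3C4_complete_multipartite_general (r : ℕ) (n : ℕ → ℕ) (hr : 3 ≤ r)
    (hpos : ∀ i : ℕ, i < r → 1 ≤ n i) :
    IsGreatest {k : ℕ |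
      ∃ c : Sym2 ((i : Fin r) × Fin (n i)) → Fin k,
        SurjOnEdges (Kpartite r n) c ∧
        ¬ RainbowC3 (Kpartite r n) c ∧ ¬ RainbowC4 (Kpartite r n) c}
      ((∑ i ∈ Finset.range r, n i) - 1) := by
  have hcard : Fintype.card ((i : Fin r) × Fin (n i)) = ∑ i ∈ Finset.range r, n i := by
    simp [Fintype.card_sigma, Fin.sum_univ_eq_sum_range]
  let v : Fin r → (i : Fin r) × Fin (n i) := fun i => ⟨i, ⟨0, hpos i i.2⟩⟩
  refine ⟨hcard ▸ SimpleGraph.completeMultipartiteGraph.exists_coloring (v₀ := v ⟨0, by omega⟩)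
    (v₁ := v ⟨1, by omega⟩) (by simp [v]), ?_⟩
  rintro k ⟨c, hc, h3, h4⟩
  have : Nonempty ((i : Fin r) × Fin (n i)) := ⟨v ⟨0, by omega⟩⟩
  by_contra hk
  obtain ⟨u, p, hp, hpc⟩ := SimpleGraph.exists_isCycle_isRainbow_of_card_le hc
    (by rw [Nat.card_eq_fintype_card, hcard]; omega)
  exact SimpleGraph.completeMultipartiteGraph.not_isRainbow_of_isCycle h3 h4 p hp hpc

/-- The anti-Ramsey number of `{C₃, C₄}` in the complete `r`-partite graph
`K_{n₁,…,n_r}` equals `n₁ + ⋯ + n_r − 1`. -/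
theorem antiRamsey_C3C4_complete_multipartite (r : ℕ) (n : ℕ → ℕ) (hr : 3 ≤ r)
    (hmono : ∀ i j : ℕ, i ≤ j → j < r → n j ≤ n i)
    (hpos : ∀ i : ℕ, i < r → 1 ≤ n i) :
    IsGreatest {k : ℕ |
      ∃ c : Sym2 ((i : Fin r) × Fin (n i)) → Fin k,
        SurjOnEdges (Kpartite r n) c ∧
        ¬ RainbowC3 (Kpartite r n) c ∧ ¬ RainbowC4 (Kpartite r n) c}
      ((∑ i ∈ Finset.range r, n i) - 1) :=
  antiRamsey_C3C4_complete_multipartite_general r n hr hpos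
end

section
/- Let r ≥ 3 and n₁ ≥ n₂ ≥ ⋯ ≥ n_r ≥ 1. For any edge-coloring of the complete r-partite graph K_{n₁,n₂,…,n_r}, if there is a rainbow multipartite cycle, then there is a rainbow 3-cycle. -/
open Finset

/-- `G` (a subgraph of an `r`-partite graph) contains a cycle whose vertex set meets
at least three distinct parts. -/
def HasMultipartiteCycle {r : ℕ} {n : ℕ → ℕ}
    (G : SimpleGraph ((i : Fin r) × Fin (n i))) : Prop :=
  ∃ (v : (i : Fin r) × Fin (n i)) (w : G.Walk v v), w.IsCycle ∧
    3 ≤ (w.support.map Sigma.fst).toFinset.card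

/-- `G` contains a path on three vertices meeting three distinct parts. -/
def HasMultipartiteP3 {r : ℕ} {n : ℕ → ℕ}
    (G : SimpleGraph ((i : Fin r) × Fin (n i))) : Prop :=
  ∃ x y z : (i : Fin r) × Fin (n i), G.Adj x y ∧ G.Adj y z ∧
    x.1 ≠ y.1 ∧ y.1 ≠ z.1 ∧ x.1 ≠ z.1

/-- Under the edge-coloring `c`, `G` contains a rainbow cycle whose vertex set meets
at least three distinct parts. -/
def HasRainbowMultipartiteCycle {r : ℕ} {n : ℕ → ℕ} {α : Type*}
    (G : SimpleGraph ((i : Fin r) × Fin (n i)))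
    (c : Sym2 ((i : Fin r) × Fin (n i)) → α) : Prop :=
  ∃ (v : (i : Fin r) × Fin (n i)) (w : G.Walk v v), w.IsCycle ∧
    3 ≤ (w.support.map Sigma.fst).toFinset.card ∧ (w.edges.map c).Nodup

/-!
Take a rainbow closed walk meeting three parts. Some three consecutive vertices `x, y, z` lie in
three distinct parts, since otherwise the parts along the walk would alternate between two
values. The chord `xz` is an edge: if its colour differs from those of `xy` and `yz`, then `xyz`
is a rainbow triangle; otherwise replacing `x y z` by `x z` leaves a shorter rainbow closed walk.
If this walk `x z w r …` has lost the third part, it alternates between the parts of `x` and `z`,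
and the same argument applied to the chord `yw` yields a rainbow triangle `yzw` or the shorter
rainbow closed walk `x y w r …`, which meets the three parts of `x`, `y`, `z`. Induct on length.
-/

namespace List

variable {V I : Type*}

def cyclicEdges (l : List V) : List (Sym2 V) := zipWith (s(·, ·)) l (l.rotate 1)

lemma cyclicEdges_rotate (l : List V) (n : ℕ) :
    (l.rotate n).cyclicEdges = l.cyclicEdges.rotate n := by
  rw [cyclicEdges, cyclicEdges, zipWith_rotate_distrib _ _ _ _ (l.length_rotate 1).symm,
    rotate_rotate, rotate_rotate, add_comm]

variable [DecidableEq I] {f : V → I} {l : List V}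

lemma three_le_card_toFinset_map {a b d : V} (ha : a ∈ l) (hb : b ∈ l) (hd : d ∈ l)
    (hab : f a ≠ f b) (hbd : f b ≠ f d) (had : f a ≠ f d) :
    3 ≤ (l.map f).toFinset.card :=
  calc 3 = ({f a, f b, f d} : Finset I).card := by simp [*]
    _ ≤ (l.map f).toFinset.card := Finset.card_le_card <| by
      simp [Finset.insert_subset_iff, mem_map_of_mem, *]

lemma exists_rotate_eq_cons_of_three_le_card (h3 : 3 ≤ (l.map f).toFinset.card) :
    ∃ n x y z rest, l.rotate n = x :: y :: z :: rest ∧ f x ≠ f z := by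
  by_contra! h
  have hl : 3 ≤ l.length := h3.trans ((toFinset_card_le _).trans (length_map f).le)
  -- `g` reads `f` around the cycle; by `h` it is 2-periodic, so it takes at most two values.
  let g (i : ℕ) : I := f (l[i % l.length]'(Nat.mod_lt _ (by omega)))
  have hper : Function.Periodic g 2 := fun i => by
    have hrot : 3 ≤ (l.rotate i).length := by rwa [length_rotate]
    have := h i _ _ _ _ (by
      rw [getElem_cons_drop, getElem_cons_drop, getElem_cons_drop, drop_zero] :
        l.rotate i = (l.rotate i)[0] :: (l.rotate i)[1] :: (l.rotate i)[2] :: (l.rotate i).drop 3)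
    simp only [getElem_rotate, zero_add] at this
    simp only [g, this, Nat.add_comm i 2]
  have hsub : (l.map f).toFinset ⊆ {g 0, g 1} := by
    intro a ha
    obtain ⟨v, hv, rfl⟩ := mem_map.1 (mem_toFinset.1 ha)
    obtain ⟨j, hj, rfl⟩ := mem_iff_getElem.1 hv
    have hgj : g j = f l[j] := by simp only [g, Nat.mod_eq_of_lt hj]
    rw [← hgj, ← hper.map_mod_nat j]
    rcases Nat.mod_two_eq_zero_or_one j with h2 | h2 <;> simp [h2]
  have := (Finset.card_le_card hsub).trans Finset.card_le_two
  omega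

end List

namespace SimpleGraph

variable {V I α : Type*}

/-- `l` lists, in cyclic order and without repeating the first one, the vertices of a closed walk
in `G` whose edges have pairwise distinct colours. -/
structure IsRainbowClosedWalk (G : SimpleGraph V) (c : Sym2 V → α) (l : List V) : Prop where
  subset_edgeSet : ∀ e ∈ l.cyclicEdges, e ∈ G.edgeSet
  nodup : (l.cyclicEdges.map c).Nodup

namespace IsRainbowClosedWalk

variable {G : SimpleGraph V} {c : Sym2 V → α}

lemma rotate {l : List V} (hl : G.IsRainbowClosedWalk c l) (n : ℕ) :
    G.IsRainbowClosedWalk c (l.rotate n) where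
  subset_edgeSet e he := hl.subset_edgeSet e <| by
    rwa [List.cyclicEdges_rotate, List.mem_rotate] at he
  nodup := by rw [List.cyclicEdges_rotate, List.map_rotate, List.nodup_rotate]; exact hl.nodup

lemma adj {x y : V} {rest : List V} (hl : G.IsRainbowClosedWalk c (x :: y :: rest)) :
    G.Adj x y :=
  hl.subset_edgeSet s(x, y) (by simp [List.cyclicEdges])

lemma rainbowC3_or_shortcut {x y z : V} {rest : List V}
    (hl : G.IsRainbowClosedWalk c (x :: y :: z :: rest)) (hxz : G.Adj x z) :
    RainbowC3 G c ∨ G.IsRainbowClosedWalk c (x :: z :: rest) := by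
  have hyz : G.Adj y z := (hl.rotate 1).adj
  have hzx : s(z, x) = s(x, z) := Sym2.eq_swap
  obtain ⟨hedges, hnodup⟩ := id hl
  simp only [List.cyclicEdges, List.rotate_cons_succ, List.rotate_zero, List.cons_append,
    List.zipWith_cons_cons, List.map_cons, List.nodup_cons, List.mem_cons, not_or,
    forall_eq_or_imp] at hnodup hedges
  by_cases hc : c s(x, z) ≠ c s(x, y) ∧ c s(x, z) ≠ c s(y, z)
  · exact .inl ⟨x, y, z, hl.adj, hyz, hxz.symm, hnodup.1.1, hzx ▸ hc.2.symm, hzx ▸ hc.1.symm⟩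
  · refine .inr ⟨?_, ?_⟩
    · simpa [List.cyclicEdges, hxz] using hedges.2.2
    · simp only [List.cyclicEdges, List.rotate_cons_succ, List.rotate_zero, List.cons_append,
        List.zipWith_cons_cons, List.map_cons, List.nodup_cons]
      refine ⟨?_, hnodup.2.2⟩
      rcases not_and_or.1 hc with h | h <;> rw [not_not.1 h]
      exacts [hnodup.1.2, hnodup.2.1]

variable [DecidableEq I] {f : V → I}

lemma rainbowC3_or_exists_shorter {l : List V}
    (hl : ((⊤ : SimpleGraph I).comap f).IsRainbowClosedWalk c l)
    (h3 : 3 ≤ (l.map f).toFinset.card) :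
    RainbowC3 ((⊤ : SimpleGraph I).comap f) c ∨
      ∃ l' : List V, l'.length < l.length ∧
        ((⊤ : SimpleGraph I).comap f).IsRainbowClosedWalk c l' ∧ 3 ≤ (l'.map f).toFinset.card := by
  obtain ⟨n, x, y, z, rest, hrot, hxz⟩ := l.exists_rotate_eq_cons_of_three_le_card h3
  have hlen : l.length = rest.length + 3 := by rw [← List.length_rotate l n, hrot]; rfl
  have hl' := hrot ▸ hl.rotate n
  obtain hC3 | hs := hl'.rainbowC3_or_shortcut hxz
  · exact .inl hC3
  by_cases h3' : 3 ≤ ((x :: z :: rest).map f).toFinset.card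
  · exact .inr ⟨_, by simp [hlen], hs, h3'⟩
  obtain _ | ⟨w, rest⟩ := rest
  · simpa [List.cyclicEdges, Sym2.eq_swap] using hs.nodup
  have hxy : f x ≠ f y := hl'.adj
  have hzw : f z ≠ f w := (hs.rotate 1).adj
  -- From here on `x z w …` alternates between the parts of `x` and `z`.
  have hwx : f w = f x := by
    by_contra hwx
    exact h3' (List.three_le_card_toFinset_map (by simp) (by simp) (by simp) hxz hzw (Ne.symm hwx))
  have hs2 := hs.rotate 2
  simp only [List.rotate_cons_succ] at hs2
  obtain _ | ⟨r, rest⟩ := rest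
  · exact (hs2.adj hwx).elim
  have hwr : f w ≠ f r := hs2.adj
  have hrz : f r = f z := by
    by_contra hrz
    exact h3' (List.three_le_card_toFinset_map (a := x) (by simp) (by simp) (by simp) hxz
      (Ne.symm hrz) (hwx ▸ hwr))
  have hm := hl'.rotate 1
  simp only [List.rotate_cons_succ, List.rotate_zero, List.cons_append] at hm
  have hyz : f y ≠ f z := hm.adj
  have hyw : f y ≠ f w := hwx ▸ hxy.symm
  refine (hm.rainbowC3_or_shortcut hyw).imp_right fun hs' => ⟨_, by simp [hlen], hs', ?_⟩
  exact List.three_le_card_toFinset_map (a := y) (b := w) (d := r) (by simp) (by simp) (by simp)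
    hyw hwr (hrz ▸ hyz)

theorem rainbowC3 {l : List V} (hl : ((⊤ : SimpleGraph I).comap f).IsRainbowClosedWalk c l)
    (h3 : 3 ≤ (l.map f).toFinset.card) : RainbowC3 ((⊤ : SimpleGraph I).comap f) c := by
  induction hlen : l.length using Nat.strong_induction_on generalizing l with
  | _ k ih =>
    obtain hC3 | ⟨l', hlt, hl', h3'⟩ := hl.rainbowC3_or_exists_shorter h3
    exacts [hC3, ih _ (hlen ▸ hlt) hl' h3' rfl]

end IsRainbowClosedWalk

namespace Walk

variable {G : SimpleGraph V} {c : Sym2 V → α} {v : V}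

lemma rotate_one_dropLast_support (w : G.Walk v v) :
    w.support.dropLast.rotate 1 = w.support.tail := by
  cases w with
  | nil => rfl
  | cons h p =>
    rw [support_cons, List.dropLast_cons_of_ne_nil p.support_ne_nil, List.rotate_cons_succ,
      List.rotate_zero, dropLast_support_concat, List.tail_cons]

lemma edges_eq_cyclicEdges (w : G.Walk v v) : w.edges = w.support.dropLast.cyclicEdges := by
  rw [List.cyclicEdges, rotate_one_dropLast_support, ← map_fst_darts, ← map_snd_darts,
    List.zipWith_map, List.zipWith_self, edges]
  rfl

lemma isRainbowClosedWalk (w : G.Walk v v) (hw : (w.edges.map c).Nodup) :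
    G.IsRainbowClosedWalk c w.support.dropLast where
  subset_edgeSet _ he := w.edges_subset_edgeSet (w.edges_eq_cyclicEdges ▸ he)
  nodup := w.edges_eq_cyclicEdges ▸ hw

theorem rainbowC3_of_nodup_map_edges [DecidableEq I] {f : V → I}
    (w : ((⊤ : SimpleGraph I).comap f).Walk v v)
    (h3 : 3 ≤ (w.support.map f).toFinset.card) (hw : (w.edges.map c).Nodup) :
    RainbowC3 ((⊤ : SimpleGraph I).comap f) c := by
  refine (w.isRainbowClosedWalk hw).rainbowC3 (h3.trans_eq (congrArg _ ?_))
  cases w with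
  | nil => simp at h3
  | cons h p =>
    rw [support_cons, List.dropLast_cons_of_ne_nil p.support_ne_nil]
    nth_rw 1 [← dropLast_support_concat p]
    ext
    simp only [List.map_cons, List.map_append, List.toFinset_cons, List.toFinset_append]
    simp

end Walk

end SimpleGraph

theorem rainbow_multipartite_cycle_to_rainbow_C3_general (r : ℕ) (n : ℕ → ℕ)
    {α : Type*} (c : Sym2 ((i : Fin r) × Fin (n i)) → α)
    (h : HasRainbowMultipartiteCycle (Kpartite r n) c) :
    RainbowC3 (Kpartite r n) c := by
  obtain ⟨v, w, -, hparts, hrainbow⟩ := h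
  exact w.rainbowC3_of_nodup_map_edges hparts hrainbow

/-- If an edge-coloring of the complete `r`-partite graph has a rainbow multipartite
cycle, then it has a rainbow triangle. -/
theorem rainbow_multipartite_cycle_to_rainbow_C3 (r : ℕ) (n : ℕ → ℕ) (hr : 3 ≤ r)
    (hmono : ∀ i j : ℕ, i ≤ j → j < r → n j ≤ n i)
    (hpos : ∀ i : ℕ, i < r → 1 ≤ n i)
    {α : Type*} (c : Sym2 ((i : Fin r) × Fin (n i)) → α)
    (h : HasRainbowMultipartiteCycle (Kpartite r n) c) :
    RainbowC3 (Kpartite r n) c :=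
  rainbow_multipartite_cycle_to_rainbow_C3_general r n c h
end

section
/- Let r ≥ 3 and n₁ ≥ n₂ ≥ ⋯ ≥ n_r ≥ 1. If G is a subgraph of the complete r-partite graph K_{n₁,n₂,…,n_r} that contains no multipartite path on three vertices, then the number of edges of G is at most n₁n₂ + n₃n₄ + ⋯ + n_{r−2}n_{r−1} when r is odd, and at most n₁n₂ + n₃n₄ + ⋯ + n_{r−1}n_r when r is even. -/
open Finset

/-!
A vertex with neighbours in two different parts would be the centre of a multipartite `P₃`, so
all neighbours of a vertex lie in one part. Let `a i j` count the vertices of part `i` with a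
neighbour in part `j`. These sets are disjoint for distinct `j`, so `∑ j, a i j ≤ nᵢ`, and
every edge between parts `i` and `j` joins two of them, so `2 e(G) ≤ ∑_{i ≠ j} a i j * a j i`.

Charging the terms of this sum at the part `i` of smallest size to the part `j` maximising
`a j i`, and lowering the capacity of `j` by `a j i`, shows by induction that the sum is at most
twice the weight `∑ nᵢ nⱼ` of some matching of the parts. An exchange argument then shows that
when `n` is non-increasing, no matching weighs more than `{0, 1}, {2, 3}, …`.
-/

lemma Finset.sum_offDiag_insert {β M : Type*} [DecidableEq β] [AddCommMonoid M]
    (f : β → β → M) {s : Finset β} {i : β} (hi : i ∉ s) :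
    ∑ p ∈ (insert i s).offDiag, f p.1 p.2 =
      ∑ p ∈ s.offDiag, f p.1 p.2 + ∑ j ∈ s, (f i j + f j i) := by
  rw [offDiag_insert hi, sum_union, sum_union, sum_product, sum_product_right, sum_singleton,
    sum_singleton, sum_add_distrib, add_assoc]
  all_goals simp only [Finset.disjoint_left, mem_union, mem_offDiag, mem_product, mem_singleton]
  all_goals grind

namespace PairList

variable {β γ : Type*} {l : List (β × β)} {s : Set β}

def support (l : List (β × β)) : List β := l.flatMap fun p => [p.1, p.2]

def weight (w : β → ℕ) (l : List (β × β)) : ℕ := (l.map fun p => w p.1 * w p.2).sum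

@[simp] lemma support_cons (p : β × β) (l : List (β × β)) :
    support (p :: l) = p.1 :: p.2 :: support l := rfl

@[simp] lemma weight_nil (w : β → ℕ) : weight w [] = 0 := rfl

@[simp] lemma weight_cons (w : β → ℕ) (p : β × β) (l : List (β × β)) :
    weight w (p :: l) = w p.1 * w p.2 + weight w l := by
  simp [weight]

lemma support_map (g : β → γ) (l : List (β × β)) :
    support (l.map (Prod.map g g)) = (support l).map g := by
  induction l with
  | nil => rfl
  | cons p l ih => simp [ih]

lemma weight_map (w : γ → ℕ) (g : β → γ) (l : List (β × β)) :
    weight w (l.map (Prod.map g g)) = weight (w ∘ g) l := by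
  induction l with
  | nil => rfl
  | cons p l ih => simp [ih]

lemma weight_mono {w w' : β → ℕ} (h : w ≤ w') (l : List (β × β)) :
    weight w l ≤ weight w' l := by
  induction l with
  | nil => rfl
  | cons p l ih => simp only [weight_cons]; gcongr <;> apply h

/-- The pairs of `l` are disjoint edges of the complete graph on `s`. -/
def IsMatchingIn (l : List (β × β)) (s : Set β) : Prop :=
  (support l).Nodup ∧ ∀ x ∈ support l, x ∈ s

lemma isMatchingIn_nil (s : Set β) : IsMatchingIn [] s := by simp [IsMatchingIn, support]

lemma isMatchingIn_cons {x y : β} :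
    IsMatchingIn ((x, y) :: l) s ↔
      x ≠ y ∧ x ∈ s ∧ y ∈ s ∧ IsMatchingIn l (s \ {x, y}) := by
  simp only [IsMatchingIn, support_cons, List.nodup_cons, List.mem_cons, Set.mem_sdiff,
    Set.mem_insert_iff, Set.mem_singleton_iff]
  grind

lemma IsMatchingIn.mono {t : Set β} (hl : IsMatchingIn l s) (hst : s ⊆ t) : IsMatchingIn l t :=
  ⟨hl.1, fun x hx => hst (hl.2 x hx)⟩

lemma IsMatchingIn.map (hl : IsMatchingIn l s) {g : β → γ} (hg : g.Injective) :
    IsMatchingIn (l.map (Prod.map g g)) (g '' s) := by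
  refine ⟨?_, ?_⟩ <;> rw [support_map]
  · exact hl.1.map hg
  · simpa using fun x hx => ⟨x, hl.2 x hx, rfl⟩

lemma IsMatchingIn.diff_singleton (hl : IsMatchingIn l s) {x : β} (hx : x ∉ support l) :
    IsMatchingIn l (s \ {x}) :=
  ⟨hl.1, fun y hy => ⟨hl.2 y hy, by rintro rfl; exact hx hy⟩⟩

lemma IsMatchingIn.eq_nil (hl : IsMatchingIn l s) (hs : s.Subsingleton) : l = [] := by
  obtain _ | ⟨⟨x, y⟩, l⟩ := l
  · rfl
  · obtain ⟨hxy, hx, hy, -⟩ := isMatchingIn_cons.1 hl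
    exact absurd (hs hx hy) hxy

lemma IsMatchingIn.exists_of_mem (hl : IsMatchingIn l s) {x : β} (hx : x ∈ support l) :
    ∃ y l', y ≠ x ∧ y ∈ s ∧ IsMatchingIn l' (s \ {x, y}) ∧
      ∀ w, weight w l = w x * w y + weight w l' := by
  induction l generalizing s with
  | nil => simp [support] at hx
  | cons p l ih =>
    obtain ⟨h12, h1, h2, hl⟩ := isMatchingIn_cons.1 hl
    simp only [support_cons, List.mem_cons] at hx
    rcases hx with rfl | rfl | hx
    · exact ⟨p.2, l, h12.symm, h2, hl, by simp⟩
    · exact ⟨p.1, l, h12, h1, by rwa [Set.pair_comm], fun w => by simp [mul_comm]⟩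
    · obtain ⟨y, l', hyx, hy, hl', hw⟩ := ih hl hx
      have hxp := hl.2 x hx
      refine ⟨y, p :: l', hyx, hy.1, isMatchingIn_cons.2 ⟨h12, ?_, ?_, ?_⟩, fun w => ?_⟩
      rotate_left 2
      · rwa [Set.sdiff_sdiff_comm]
      · simp only [weight_cons, hw]
        ring
      all_goals
        simp only [Set.mem_sdiff, Set.mem_insert_iff, Set.mem_singleton_iff] at hxp hy ⊢
        grind

lemma IsMatchingIn.exists_weight_add_le (hl : IsMatchingIn l s) {i j : β} (hi : i ∉ s)
    (hj : j ∈ s) {n n' : β → ℕ} {t : ℕ} (hn' : n' ≤ n) (hj' : n' j + t ≤ n j)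
    (hmin : ∀ k ∈ s, n i ≤ n k) :
    ∃ l₁, IsMatchingIn l₁ (insert i s) ∧ weight n' l + t * n i ≤ weight n l₁ := by
  by_cases hjl : j ∈ support l
  · obtain ⟨k, l₂, -, hk, -, hw⟩ := hl.exists_of_mem hjl
    refine ⟨l, hl.mono (Set.subset_insert i s), ?_⟩
    calc weight n' l + t * n i = n' j * n' k + t * n i + weight n' l₂ := by rw [hw]; ring
      _ ≤ n' j * n k + t * n k + weight n l₂ := by
        gcongr
        exacts [hn' k, hmin k hk, weight_mono hn' l₂]
      _ = (n' j + t) * n k + weight n l₂ := by ring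
      _ ≤ weight n l := by rw [hw]; gcongr
  · refine ⟨(j, i) :: l, isMatchingIn_cons.2 ⟨?_, ?_, ?_, ?_⟩, ?_⟩
    · rintro rfl; exact hi hj
    · exact Set.mem_insert_of_mem i hj
    · exact Set.mem_insert i s
    · refine ⟨hl.1, fun x hx => ⟨Set.mem_insert_of_mem i (hl.2 x hx), ?_⟩⟩
      rintro (rfl | rfl)
      exacts [hjl hx, hi (hl.2 x hx)]
    · rw [weight_cons]
      have := weight_mono hn' l
      nlinarith

theorem exists_isMatchingIn_sum_offDiag_le [DecidableEq β] (a : β → β → ℕ) (s : Finset β)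
    (n : β → ℕ) (hrow : ∀ i ∈ s, ∑ j ∈ s, a i j ≤ n i) :
    ∃ l, IsMatchingIn l s ∧ ∑ p ∈ s.offDiag, a p.1 p.2 * a p.2 p.1 ≤ 2 * weight n l := by
  induction s using Finset.strongInduction generalizing n with | _ s ih =>
  obtain rfl | ⟨i, hi, hmin⟩ := s.eq_empty_or_nonempty.imp_right (s.exists_min_image n)
  · exact ⟨[], isMatchingIn_nil _, by simp⟩
  obtain ⟨s, his, rfl⟩ : ∃ s', i ∉ s' ∧ insert i s' = s :=
    ⟨_, notMem_erase i s, insert_erase hi⟩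
  obtain rfl | ⟨j, hj, hjmax⟩ := s.eq_empty_or_nonempty.imp_right (s.exists_max_image (a · i))
  · exact ⟨[], isMatchingIn_nil _, by simp⟩
  have hrow_insert : ∀ k ∈ s, a k i + ∑ l ∈ s, a k l ≤ n k := fun k hk => by
    simpa [sum_insert his] using hrow k (mem_insert_of_mem hk)
  set t := a j i
  set n' := Function.update n j (n j - t)
  have hn' : n' ≤ n := fun k => by
    simp only [n', Function.update_apply]
    split_ifs with hk <;> [subst hk; skip] <;> omega
  have hj' : n' j + t ≤ n j := by
    have := hrow_insert j hj
    simp only [n', Function.update_self]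
    omega
  have hrow' : ∀ k ∈ s, ∑ l ∈ s, a k l ≤ n' k := fun k hk => by
    have := hrow_insert k hk
    simp only [n', Function.update_apply]
    split_ifs with hkj <;> [subst hkj; skip] <;> omega
  obtain ⟨l', hl', hsum'⟩ := ih s (ssubset_insert his) n' hrow'
  obtain ⟨l, hl, hw⟩ := hl'.exists_weight_add_le (mod_cast his) hj hn' hj' fun k hk =>
    hmin k (mem_insert_of_mem hk)
  refine ⟨l, by rwa [coe_insert], ?_⟩
  have hstar : ∑ k ∈ s, a i k * a k i ≤ t * n i :=
    calc ∑ k ∈ s, a i k * a k i ≤ ∑ k ∈ s, a i k * t := by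
          gcongr with k hk
          exact hjmax k hk
      _ ≤ ∑ k ∈ insert i s, a i k * t := sum_le_sum_of_subset (subset_insert i s)
      _ ≤ t * n i := by rw [← sum_mul, mul_comm]; gcongr; exact hrow i (mem_insert_self i s)
  calc ∑ p ∈ (insert i s).offDiag, a p.1 p.2 * a p.2 p.1
      = ∑ p ∈ s.offDiag, a p.1 p.2 * a p.2 p.1 + 2 * ∑ k ∈ s, a i k * a k i := by
        rw [sum_offDiag_insert (fun x y => a x y * a y x) his, mul_sum]
        exact congrArg _ (sum_congr rfl fun k _ => by ring)
    _ ≤ 2 * weight n' l' + 2 * (t * n i) := by gcongr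
    _ ≤ 2 * weight n l := by omega

section Antitone

variable {n : ℕ → ℕ} {a r : ℕ} {l : List (ℕ × ℕ)}

lemma IsMatchingIn.exists_weight_le_mul_add_of_mem (hn : AntitoneOn n (Set.Iio r))
    (hl : IsMatchingIn l (Set.Ico a r)) (ha : a ∈ support l) :
    ∃ l', IsMatchingIn l' (Set.Ico (a + 2) r) ∧
      weight n l ≤ n a * n (a + 1) + weight n l' := by
  obtain ⟨y, l₁, hya, hy, hl₁, hw⟩ := hl.exists_of_mem ha
  simp only [Set.mem_Ico] at hy
  have hny : n y ≤ n (a + 1) := hn (by simp; omega) (by simpa using hy.2) (by omega)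
  by_cases ha₁ : a + 1 ∈ support l₁
  · obtain ⟨z, l₂, hz, hzs, hl₂, hw₁⟩ := hl₁.exists_of_mem ha₁
    have hya₁ : y ≠ a + 1 := by
      rintro rfl
      simpa using hl₁.2 _ ha₁
    simp only [Set.mem_sdiff, Set.mem_Ico, Set.mem_insert_iff, Set.mem_singleton_iff] at hzs
    have hnz : n z ≤ n a := hn (by simp; omega) (by simp; omega) (by omega)
    refine ⟨(y, z) :: l₂,
      isMatchingIn_cons.2 ⟨by omega, ?_, ?_, hl₂.mono fun x => ?_⟩, ?_⟩
    rotate_right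
    · rw [hw, hw₁, weight_cons]
      nlinarith
    all_goals
      simp only [Set.mem_sdiff, Set.mem_Ico, Set.mem_insert_iff, Set.mem_singleton_iff]
      omega
  · refine ⟨l₁, (hl₁.diff_singleton ha₁).mono fun x => ?_, ?_⟩
    · simp only [Set.mem_sdiff, Set.mem_Ico, Set.mem_insert_iff, Set.mem_singleton_iff]
      omega
    · rw [hw]
      gcongr

lemma IsMatchingIn.exists_weight_le_mul_add (hn : AntitoneOn n (Set.Iio r))
    (hl : IsMatchingIn l (Set.Ico a r)) :
    ∃ l', IsMatchingIn l' (Set.Ico (a + 2) r) ∧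
      weight n l ≤ n a * n (a + 1) + weight n l' := by
  by_cases ha : a ∈ support l
  · exact hl.exists_weight_le_mul_add_of_mem hn ha
  replace hl := hl.diff_singleton ha
  by_cases ha₁ : a + 1 ∈ support l
  · obtain ⟨y, l₁, hya, hy, hl₁, hw⟩ := hl.exists_of_mem ha₁
    simp only [Set.mem_sdiff, Set.mem_Ico, Set.mem_singleton_iff] at hy
    refine ⟨l₁, hl₁.mono fun x => ?_, ?_⟩
    · simp only [Set.mem_sdiff, Set.mem_Ico, Set.mem_insert_iff, Set.mem_singleton_iff]
      omega
    · rw [hw, mul_comm (n a)]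
      gcongr
      exact hn (by simp; omega) (by simpa using hy.1.2) (by omega)
  · refine ⟨l, (hl.diff_singleton ha₁).mono fun x => ?_, le_add_self⟩
    simp only [Set.mem_sdiff, Set.mem_Ico, Set.mem_singleton_iff]
    omega

theorem IsMatchingIn.weight_le_sum_Ico (hn : AntitoneOn n (Set.Iio r)) (m : ℕ)
    {l : List (ℕ × ℕ)} (hl : IsMatchingIn l (Set.Ico (2 * m) r)) :
    weight n l ≤ ∑ k ∈ Ico m (r / 2), n (2 * k) * n (2 * k + 1) := by
  by_cases hm : m < r / 2
  · obtain ⟨l', hl', hw⟩ := hl.exists_weight_le_mul_add hn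
    rw [sum_eq_sum_Ico_succ_bot hm]
    grw [hw, hl'.weight_le_sum_Ico hn (m + 1)]
  · rw [hl.eq_nil fun x hx y hy => by simp only [Set.mem_Ico] at hx hy; omega]
    simp
termination_by r - 2 * m

theorem IsMatchingIn.weight_le_sum_range (hn : AntitoneOn n (Set.Iio r))
    (hl : IsMatchingIn l (Set.Iio r)) :
    weight n l ≤ ∑ k ∈ range (r / 2), n (2 * k) * n (2 * k + 1) := by
  rw [range_eq_Ico]
  exact (hl.mono (t := Set.Ico (2 * 0) r) fun x hx => ⟨x.zero_le, hx⟩).weight_le_sum_Ico hn 0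

end Antitone

end PairList

namespace SimpleGraph

variable {V ι : Type*} [Fintype V] [DecidableEq ι] (G : SimpleGraph V) [DecidableRel G.Adj]
  (f : V → ι)

def verticesAdjToPart (i j : ι) : Finset V := {v | f v = i ∧ ∃ w, G.Adj v w ∧ f w = j}

variable {G f}

lemma disjoint_verticesAdjToPart
    (hnbr : ∀ ⦃x y z⦄, G.Adj x y → G.Adj y z → f x = f z) (i : ι) {j k : ι}
    (hjk : j ≠ k) :
    Disjoint (G.verticesAdjToPart f i j) (G.verticesAdjToPart f i k) := by
  rw [Finset.disjoint_left]
  intro v hv hv'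
  simp only [verticesAdjToPart, mem_filter, mem_univ, true_and] at hv hv'
  obtain ⟨-, w, hvw, rfl⟩ := hv
  obtain ⟨-, w', hvw', rfl⟩ := hv'
  exact hjk (hnbr hvw.symm hvw')

lemma sum_card_verticesAdjToPart_le [Fintype ι]
    (hnbr : ∀ ⦃x y z⦄, G.Adj x y → G.Adj y z → f x = f z) (i : ι) :
    ∑ j, #(G.verticesAdjToPart f i j) ≤ #{v | f v = i} := by
  classical
  rw [← card_biUnion fun j _ k _ hjk => disjoint_verticesAdjToPart hnbr i hjk]
  refine card_le_card fun v hv => ?_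
  obtain ⟨j, -, hv⟩ := mem_biUnion.1 hv
  simp only [verticesAdjToPart, mem_filter] at hv ⊢
  exact ⟨mem_univ v, hv.2.1⟩

lemma degree_le_card_verticesAdjToPart
    (hnbr : ∀ ⦃x y z⦄, G.Adj x y → G.Adj y z → f x = f z) {i j : ι} {v : V}
    (hv : v ∈ G.verticesAdjToPart f i j) :
    G.degree v ≤ #(G.verticesAdjToPart f j i) := by
  rw [← card_neighborFinset_eq_degree]
  refine card_le_card fun w hw => ?_
  simp only [verticesAdjToPart, mem_filter, mem_univ, true_and, mem_neighborFinset] at hv hw ⊢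
  obtain ⟨rfl, u, hvu, rfl⟩ := hv
  exact ⟨hnbr hw.symm hvu, v, hw.symm, rfl⟩

theorem two_mul_card_edgeFinset_le_sum_offDiag [Fintype ι]
    (hf : ∀ ⦃u v⦄, G.Adj u v → f u ≠ f v)
    (hnbr : ∀ ⦃x y z⦄, G.Adj x y → G.Adj y z → f x = f z) :
    2 * #G.edgeFinset ≤ ∑ p ∈ univ.offDiag,
      #(G.verticesAdjToPart f p.1 p.2) * #(G.verticesAdjToPart f p.2 p.1) := by
  classical
  rw [← sum_degrees_eq_twice_card_edges]
  calc ∑ v, G.degree v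
      ≤ ∑ v, ∑ p ∈ univ.offDiag,
          if v ∈ G.verticesAdjToPart f p.1 p.2 then #(G.verticesAdjToPart f p.2 p.1) else 0 := by
        gcongr with v
        obtain ⟨w, hvw⟩ | hv := (G.neighborFinset v).eq_empty_or_nonempty.symm
        · rw [mem_neighborFinset] at hvw
          have hv : v ∈ G.verticesAdjToPart f (f v) (f w) := by
            simpa [verticesAdjToPart] using ⟨w, hvw, rfl⟩
          have hp : (f v, f w) ∈ (univ.offDiag : Finset (ι × ι)) :=
            mem_offDiag.2 ⟨mem_univ _, mem_univ _, hf hvw⟩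
          refine (degree_le_card_verticesAdjToPart hnbr hv).trans
            (le_of_eq_of_le ?_ (single_le_sum (fun _ _ => Nat.zero_le _) hp))
          exact (if_pos hv).symm
        · simp [← card_neighborFinset_eq_degree, hv]
    _ = _ := by
        rw [sum_comm]
        simp [sum_ite_mem]

end SimpleGraph

open PairList in
theorem edge_bound_no_multipartite_P3_general (r : ℕ) (n : ℕ → ℕ)
    (hmono : ∀ i j : ℕ, i ≤ j → j < r → n j ≤ n i)
    (G : SimpleGraph ((i : Fin r) × Fin (n i))) (hG : G ≤ Kpartite r n)
    (hP3 : ¬ HasMultipartiteP3 G) :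
    G.edgeSet.ncard ≤
      (if Odd r then ∑ i ∈ Finset.range ((r - 1) / 2), n (2 * i) * n (2 * i + 1)
       else ∑ i ∈ Finset.range (r / 2), n (2 * i) * n (2 * i + 1)) := by
  classical
  have hf : ∀ ⦃u v⦄, G.Adj u v → u.1 ≠ v.1 := fun u v h => by simpa [Kpartite] using hG h
  have hnbr : ∀ ⦃x y z⦄, G.Adj x y → G.Adj y z → x.1 = z.1 := fun x y z hxy hyz => by
    by_contra h
    exact hP3 ⟨x, y, z, hxy, hyz, hf hxy, hf hyz, h⟩
  obtain ⟨l, hl, hsum⟩ := exists_isMatchingIn_sum_offDiag_le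
    (fun i j => #(G.verticesAdjToPart Sigma.fst i j)) univ (n ∘ Fin.val) fun i _ =>
      (G.sum_card_verticesAdjToPart_le hnbr i).trans_eq <| by
        rw [← Fintype.card_subtype, Fintype.card_congr (Equiv.sigmaSubtype i), Fintype.card_fin]
        rfl
  have hweight := ((hl.map Fin.val_injective).mono (by rintro _ ⟨i, -, rfl⟩; exact i.isLt)
    ).weight_le_sum_range fun i _ j hj hij => hmono i j hij hj
  rw [weight_map] at hweight
  have hodd : Odd r → (r - 1) / 2 = r / 2 := by rintro ⟨k, rfl⟩; omega
  rw [← G.coe_edgeFinset, Set.ncard_coe_finset]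
  have := G.two_mul_card_edgeFinset_le_sum_offDiag hf hnbr
  split_ifs with h
  · rw [hodd h]; omega
  · omega

/-- A subgraph of the complete `r`-partite graph with no multipartite `P₃` has at most
`n₁n₂ + n₃n₄ + ⋯` edges. -/
theorem edge_bound_no_multipartite_P3 (r : ℕ) (n : ℕ → ℕ) (hr : 3 ≤ r)
    (hmono : ∀ i j : ℕ, i ≤ j → j < r → n j ≤ n i)
    (hpos : ∀ i : ℕ, i < r → 1 ≤ n i)
    (G : SimpleGraph ((i : Fin r) × Fin (n i))) (hG : G ≤ Kpartite r n)
    (hP3 : ¬ HasMultipartiteP3 G) :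
    G.edgeSet.ncard ≤
      (if Odd r then ∑ i ∈ Finset.range ((r - 1) / 2), n (2 * i) * n (2 * i + 1)
       else ∑ i ∈ Finset.range (r / 2), n (2 * i) * n (2 * i + 1)) :=
  edge_bound_no_multipartite_P3_general r n hmono G hG hP3
end

section
/- Let G be a subgraph of a complete r-partite graph K_{n₁,n₂,…,n_r} that contains no multipartite cycle. If P = xyz is a multipartite path on three vertices in G (i.e., x, y, z pairwise lie in at least three distinct parts), then y is a cut vertex of G. -/
open Finset

/-- `y` is a cut vertex of `G`: removing `y` disconnects two vertices that were
connected in `G`. -/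
def IsCutVertex {V : Type*} (G : SimpleGraph V) (y : V) : Prop :=
  ∃ (u w : V) (hu : u ≠ y) (hw : w ≠ y), G.Reachable u w ∧
    ¬ (G.induce {v : V | v ≠ y}).Reachable ⟨u, hu⟩ ⟨w, hw⟩

/-! If `G - y` still connected `x` and `z`, a path from `x` to `z` avoiding `y` would close up
with the edges `zy` and `yx` into a cycle whose vertices meet the three distinct parts of
`x`, `y` and `z`. -/

namespace SimpleGraph

variable {V : Type*} {G : SimpleGraph V}

theorem Reachable.exists_isPath_of_induce {s : Set V} {u v : s}
    (h : (G.induce s).Reachable u v) :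
    ∃ p : G.Walk u v, p.IsPath ∧ ∀ w ∈ p.support, w ∈ s := by
  classical
  obtain ⟨q⟩ := h
  refine ⟨q.toPath.val.map (Embedding.induce s).toHom,
    q.toPath.property.map Subtype.val_injective, fun w hw => ?_⟩
  have hw' := Walk.support_map (Embedding.induce s).toHom q.toPath.val ▸ hw
  obtain ⟨w', -, rfl⟩ := List.mem_map.mp hw'
  exact w'.property

theorem Walk.IsPath.cons_concat_isCycle {x y z : V} {p : G.Walk x z} (hp : p.IsPath)
    (hyp : y ∉ p.support) (hxy : G.Adj x y) (hyz : G.Adj y z) (hxz : x ≠ z) :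
    (Walk.cons hxy.symm (p.concat hyz.symm)).IsCycle := by
  refine (Walk.cons_isCycle_iff _ _).mpr ⟨hp.concat hyp hyz.symm, fun he => ?_⟩
  rw [Walk.edges_concat, List.concat_eq_append, List.mem_append, List.mem_singleton,
    Sym2.eq_iff] at he
  rcases he with he | ⟨rfl, -⟩ | ⟨-, rfl⟩
  · exact hyp (p.fst_mem_support_of_mem_edges he)
  · exact hyz.ne rfl
  · exact hxz rfl

end SimpleGraph

theorem List.three_le_card_toFinset_map_s6 {α β : Type*} [DecidableEq β] {f : α → β}
    {l : List α} {a b c : α} (ha : a ∈ l) (hb : b ∈ l) (hc : c ∈ l)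
    (hab : f a ≠ f b) (hbc : f b ≠ f c) (hac : f a ≠ f c) :
    3 ≤ (l.map f).toFinset.card := by
  have hcard : ({f a, f b, f c} : Finset β).card = 3 :=
    Finset.card_eq_three.mpr ⟨_, _, _, hab, hac, hbc, rfl⟩
  have hsub : ({f a, f b, f c} : Finset β) ⊆ (l.map f).toFinset := by
    simp [Finset.insert_subset_iff, ha, hb, hc, List.mem_map_of_mem]
  exact hcard.symm.le.trans (Finset.card_le_card hsub)

theorem middle_of_multipartite_P3_is_cutVertex_general (r : ℕ) (n : ℕ → ℕ)
    (G : SimpleGraph ((i : Fin r) × Fin (n i)))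
    (hnc : ¬ HasMultipartiteCycle G)
    (x y z : (i : Fin r) × Fin (n i)) (hxy : G.Adj x y) (hyz : G.Adj y z)
    (h1 : x.1 ≠ y.1) (h2 : y.1 ≠ z.1) (h3 : x.1 ≠ z.1) :
    IsCutVertex G y := by
  refine ⟨x, z, hxy.ne, hyz.ne.symm, hxy.reachable.trans hyz.reachable, fun hreach => hnc ?_⟩
  obtain ⟨p, hp, hp_avoid⟩ := hreach.exists_isPath_of_induce
  have hyp : y ∉ p.support := fun hy => hp_avoid y hy rfl
  have hxz : x ≠ z := fun h => h3 (congrArg Sigma.fst h)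
  refine ⟨y, _, hp.cons_concat_isCycle hyp hxy hyz hxz, ?_⟩
  exact List.three_le_card_toFinset_map_s6 (by simp) (by simp) (by simp) h1 h2 h3

/-- In a subgraph of a complete `r`-partite graph with no multipartite cycle, the middle
vertex of any multipartite `P₃` is a cut vertex. -/
theorem middle_of_multipartite_P3_is_cutVertex (r : ℕ) (n : ℕ → ℕ)
    (G : SimpleGraph ((i : Fin r) × Fin (n i))) (hG : G ≤ Kpartite r n)
    (hnc : ¬ HasMultipartiteCycle G)
    (x y z : (i : Fin r) × Fin (n i)) (hxy : G.Adj x y) (hyz : G.Adj y z)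
    (h1 : x.1 ≠ y.1) (h2 : y.1 ≠ z.1) (h3 : x.1 ≠ z.1) :
    IsCutVertex G y :=
  middle_of_multipartite_P3_is_cutVertex_general r n G hnc x y z hxy hyz h1 h2 h3
end

section
/- For every integer r ≥ 3 and integers n₁ ≥ n₂ ≥ ⋯ ≥ n_r ≥ 1, the maximum number of pairwise vertex-disjoint triangles in the complete r-partite graph K_{n₁,n₂,…,n_r} equals min{ ⌊(n₁+⋯+n_r)/3⌋, ⌊(n₂+⋯+n_r)/2⌋, n₃+⋯+n_r }. -/
open Finset

/-- `G` contains `t` pairwise vertex-disjoint triangles. -/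
def HasDisjointTriangles {V : Type*} (G : SimpleGraph V) (t : ℕ) : Prop :=
  ∃ f : Fin t → Finset V, (∀ i, G.IsNClique 3 (f i)) ∧
    ∀ i j : Fin t, i ≠ j → Disjoint (f i) (f j)

/-!
A triangle of a complete multipartite graph has its three vertices in three different parts, so
at least `3 - m` of them lie outside the `m` largest parts; summing over disjoint triangles gives
the three upper bounds. Conversely, if `t` is at most the minimum, keep `min nᵢ t` vertices of
each part: at least `3t` vertices remain (split according to how many parts exceed `t`). List them
part by part; since no part fills `t` consecutive positions, the vertices at positions
`l, l + t, l + 2t` (`l < t`) form `t` disjoint triangles. Both halves work for `k`-cliques.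
-/

namespace SimpleGraph.completeMultipartiteGraph

variable {ι : Type*} [DecidableEq ι] {α : ι → Type*}

theorem card_filter_fst_mem_le {c : Finset ((i : ι) × α i)}
    (hc : (completeMultipartiteGraph α).IsClique (c : Set ((i : ι) × α i))) (s : Finset ι) :
    #(c.filter (·.1 ∈ s)) ≤ #s :=
  card_le_card_of_injOn (·.1) (fun _ hv => (mem_filter.1 hv).2)
    fun _ hv _ hw hvw => by_contra fun hne => hc (mem_filter.1 hv).1 (mem_filter.1 hw).1 hne hvw

theorem sub_card_mul_le_sum_card [Fintype ι] [∀ i, Fintype (α i)] {k t : ℕ}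
    {f : Fin t → Finset ((i : ι) × α i)}
    (hf : ∀ l, (completeMultipartiteGraph α).IsNClique k (f l))
    (hdisj : ∀ l l', l ≠ l' → Disjoint (f l) (f l')) (s : Finset ι) :
    (k - #s) * t ≤ ∑ i ∈ sᶜ, Fintype.card (α i) := by
  classical
  have hmeet : ∀ l, k - #s ≤ #((f l).filter (·.1 ∉ s)) := fun l => by
    have := card_filter_add_card_filter_not (s := f l) (p := (·.1 ∈ s))
    have := card_filter_fst_mem_le (hf l).isClique s
    have := (hf l).card_eq
    omega
  calc (k - #s) * t ≤ ∑ l, #((f l).filter (·.1 ∉ s)) := by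
        simpa [mul_comm] using sum_le_sum fun l (_ : l ∈ univ) => hmeet l
    _ = #(univ.biUnion fun l => (f l).filter (·.1 ∉ s)) :=
        (card_biUnion fun l _ l' _ h => disjoint_filter_filter (hdisj l l' h)).symm
    _ ≤ #(sᶜ.sigma fun _ => univ) :=
        card_le_card fun v hv => by simp_all
    _ = ∑ i ∈ sᶜ, Fintype.card (α i) := by simp [card_sigma]

end SimpleGraph.completeMultipartiteGraph

theorem finSigmaFinEquiv_symm_fst_ne {m t : ℕ} {d : Fin m → ℕ} (hd : ∀ i, d i ≤ t)
    {x y : Fin (∑ i, d i)} (hxy : (x : ℕ) + t ≤ y) :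
    (finSigmaFinEquiv.symm x).1 ≠ (finSigmaFinEquiv.symm y).1 := by
  rw [← finSigmaFinEquiv.apply_symm_apply x, ← finSigmaFinEquiv.apply_symm_apply y] at hxy
  generalize finSigmaFinEquiv.symm x = v, finSigmaFinEquiv.symm y = w at hxy ⊢
  obtain ⟨i, p⟩ := v
  obtain ⟨j, q⟩ := w
  rintro (rfl : i = j)
  simp only [finSigmaFinEquiv_apply] at hxy
  have := hd i
  omega

theorem Kpartite.exists_disjoint_isNClique {r k t : ℕ} {n : ℕ → ℕ}
    (h : k * t ≤ ∑ i : Fin r, min (n i) t) :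
    ∃ f : Fin t → Finset ((i : Fin r) × Fin (n i)), (∀ l, (Kpartite r n).IsNClique k (f l)) ∧
      ∀ l l', l ≠ l' → Disjoint (f l) (f l') := by
  classical
  -- `φ (a, l)` is the vertex at position `l + t * a` when the first `min (n i) t` vertices
  -- of each part are listed part by part.
  let φ : Fin k × Fin t → (i : Fin r) × Fin (n i) :=
    Sigma.map id (fun i => Fin.castLE (min_le_left (n i) t)) ∘
      finSigmaFinEquiv.symm ∘
      Fin.castLE h ∘ finProdFinEquiv
  have hφ : φ.Injective :=
    .comp (Function.injective_id.sigma_map fun _ => Fin.castLE_injective _) <|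
      .comp (Equiv.injective _) <| .comp (Fin.castLE_injective _) (Equiv.injective _)
  have hcol : ∀ l a b, a < b → (φ (a, l)).1 ≠ (φ (b, l)).1 := fun l a b hab =>
    finSigmaFinEquiv_symm_fst_ne (fun i => min_le_right (n i) t) <| by
      simp only [Function.comp_apply, Fin.val_castLE, finProdFinEquiv_apply_val]
      nlinarith [Fin.lt_def.1 hab]
  refine ⟨fun l => univ.image fun a => φ (a, l), fun l => ⟨?_, ?_⟩, fun l l' hll' => ?_⟩
  · simp only [coe_image, coe_univ, Set.image_univ]
    rintro _ ⟨a, rfl⟩ _ ⟨b, rfl⟩ hab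
    rcases lt_or_gt_of_ne (ne_of_apply_ne (fun a => φ (a, l)) hab) with h | h
    · exact hcol l a b h
    · exact (hcol l b a h).symm
  · rw [card_image_of_injective _ fun a b hab => congrArg Prod.fst (hφ hab), card_univ,
      Fintype.card_fin]
  · simp only [disjoint_left, mem_image, mem_univ, true_and, not_exists]
    rintro _ ⟨a, rfl⟩ b hb
    exact hll' (congrArg Prod.snd (hφ hb)).symm

theorem mul_le_sum_Ico_min {n : ℕ → ℕ} {r t : ℕ} (hn : AntitoneOn n (Set.Iio r)) :
    ∀ k j, (∀ m < k, (k - m) * t ≤ ∑ i ∈ Ico (j + m) r, n i) →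
      k * t ≤ ∑ i ∈ Ico j r, min (n i) t
  | 0, _, _ => by simp
  | k + 1, j, h => by
    by_cases hj : n j ≤ t
    · calc (k + 1) * t ≤ ∑ i ∈ Ico j r, n i := by simpa using h 0 k.succ_pos
        _ = ∑ i ∈ Ico j r, min (n i) t := sum_congr rfl fun i hi => by
          rw [mem_Ico] at hi
          rw [min_eq_left ((hn (hi.1.trans_lt hi.2) hi.2 hi.1).trans hj)]
    · rcases lt_or_ge j r with hjr | hjr
      · rw [sum_eq_sum_Ico_succ_bot hjr, min_eq_right (by omega), add_mul, one_mul, add_comm]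
        gcongr
        exact mul_le_sum_Ico_min hn k (j + 1) fun m hm => by
          simpa [add_assoc, add_comm 1 m] using h (m + 1) (by omega)
      · have := h 0 k.succ_pos
        simp_all

theorem Kpartite.exists_disjoint_isNClique_iff {r k t : ℕ} {n : ℕ → ℕ} (hk : k ≤ r)
    (hn : AntitoneOn n (Set.Iio r)) :
    (∃ f : Fin t → Finset ((i : Fin r) × Fin (n i)), (∀ l, (Kpartite r n).IsNClique k (f l)) ∧
      ∀ l l', l ≠ l' → Disjoint (f l) (f l')) ↔ ∀ m < k, (k - m) * t ≤ ∑ i ∈ Ico m r, n i := by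
  refine ⟨fun ⟨f, hf, hdisj⟩ m hm => ?_, fun h => Kpartite.exists_disjoint_isNClique ?_⟩
  · let a : Fin r := ⟨m, by omega⟩
    have hcompl : (Iio a)ᶜ = Ici a := by ext; simp
    have := SimpleGraph.completeMultipartiteGraph.sub_card_mul_le_sum_card hf hdisj (Iio a)
    rw [Fin.card_Iio, hcompl] at this
    rw [← Fin.map_valEmbedding_Ici (a := a), sum_map]
    simpa using this
  · rw [Fin.sum_univ_eq_sum_range (fun i => min (n i) t), range_eq_Ico]
    exact mul_le_sum_Ico_min hn k 0 (by simpa using h)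

theorem max_disjoint_triangles_complete_multipartite_general (r : ℕ) (n : ℕ → ℕ) (hr : 3 ≤ r)
    (hmono : ∀ i j : ℕ, i ≤ j → j < r → n j ≤ n i) :
    IsGreatest {t : ℕ | HasDisjointTriangles (Kpartite r n) t}
      (min (min ((∑ i ∈ Finset.range r, n i) / 3) ((∑ i ∈ Finset.Ico 1 r, n i) / 2))
        (∑ i ∈ Finset.Ico 2 r, n i)) := by
  have hfeasible : ∀ t, HasDisjointTriangles (Kpartite r n) t ↔
      ∀ m < 3, (3 - m) * t ≤ ∑ i ∈ Ico m r, n i := fun t =>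
    Kpartite.exists_disjoint_isNClique_iff hr fun i _ j hj hij => hmono i j hij hj
  have hbound : ∀ t, (∀ m < 3, (3 - m) * t ≤ ∑ i ∈ Ico m r, n i) ↔
      t ≤ min (min ((∑ i ∈ range r, n i) / 3) ((∑ i ∈ Ico 1 r, n i) / 2))
        (∑ i ∈ Ico 2 r, n i) := by
    intro t
    simp only [le_min_iff, Nat.le_div_iff_mul_le three_pos, Nat.le_div_iff_mul_le two_pos,
      range_eq_Ico]
    refine ⟨fun h => ?_, fun h m hm => ?_⟩
    · have := h 0 three_pos; have := h 1 (by norm_num); have := h 2 (by norm_num)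
      omega
    · interval_cases m <;> omega
  rw [show {t | HasDisjointTriangles (Kpartite r n) t} = Set.Iic _ from
    Set.ext fun t => (hfeasible t).trans (hbound t)]
  exact isGreatest_Iic

/-- The maximum number of pairwise vertex-disjoint triangles in the complete
`r`-partite graph equals `min{⌊(n₁+⋯+n_r)/3⌋, ⌊(n₂+⋯+n_r)/2⌋, n₃+⋯+n_r}`. -/
theorem max_disjoint_triangles_complete_multipartite (r : ℕ) (n : ℕ → ℕ) (hr : 3 ≤ r)
    (hmono : ∀ i j : ℕ, i ≤ j → j < r → n j ≤ n i)
    (hpos : ∀ i : ℕ, i < r → 1 ≤ n i) :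
    IsGreatest {t : ℕ | HasDisjointTriangles (Kpartite r n) t}
      (min (min ((∑ i ∈ Finset.range r, n i) / 3) ((∑ i ∈ Finset.Ico 1 r, n i) / 2))
        (∑ i ∈ Finset.Ico 2 r, n i)) :=
  max_disjoint_triangles_complete_multipartite_general r n hr hmono
end

section
/- For every integer r ≥ 3 and integers n₁ ≥ n₂ ≥ ⋯ ≥ n_r ≥ 1, there exists an edge-coloring of the complete r-partite graph K_{n₁,n₂,…,n_r} using exactly n₁ + n₂ + ⋯ + n_r − 1 colors that contains no rainbow 3-cycle and no rainbow 4-cycle. -/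
open Finset

/-- An ordering key on the vertices of the complete multipartite graph. -/
def kkey (s : ℕ) (n : ℕ → ℕ) (v : (i : Fin (s + 2)) × Fin (n i)) : ℕ :=
  if (v.1 : ℕ) < s then (∑ k ∈ Finset.range (v.1 : ℕ), n k) + (v.2 : ℕ)
  else if (v.1 : ℕ) = s then
    (if (v.2 : ℕ) < n s - n (s + 1)
     then (∑ k ∈ Finset.range s, n k) + (v.2 : ℕ)
     else (∑ k ∈ Finset.range s, n k) + (n s - n (s + 1)) +
       2 * ((v.2 : ℕ) - (n s - n (s + 1))))
  else (∑ k ∈ Finset.range s, n k) + (n s - n (s + 1)) + 2 * (v.2 : ℕ) + 1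

lemma kkey_lo (s : ℕ) (n : ℕ → ℕ) (a b : ℕ) (ha : a < s) (h2 : a < s + 2)
    (hb : b < n a) :
    kkey s n ⟨⟨a, h2⟩, ⟨b, hb⟩⟩ = (∑ k ∈ Finset.range a, n k) + b := by
  simp [kkey, ha]

lemma kkey_mid1 (s : ℕ) (n : ℕ → ℕ) (b : ℕ) (hb : b < n s)
    (hlo : b < n s - n (s + 1)) :
    kkey s n ⟨⟨s, by omega⟩, ⟨b, hb⟩⟩ = (∑ k ∈ Finset.range s, n k) + b := by
  simp [kkey, hlo]

lemma kkey_mid2 (s : ℕ) (n : ℕ → ℕ) (b : ℕ) (hb : b < n s)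
    (hlo : ¬ b < n s - n (s + 1)) :
    kkey s n ⟨⟨s, by omega⟩, ⟨b, hb⟩⟩ =
      (∑ k ∈ Finset.range s, n k) + (n s - n (s + 1)) + 2 * (b - (n s - n (s + 1))) := by
  simp [kkey, hlo]

lemma kkey_hi (s : ℕ) (n : ℕ → ℕ) (b : ℕ) (hb : b < n (s + 1)) :
    kkey s n ⟨⟨s + 1, by omega⟩, ⟨b, hb⟩⟩ =
      (∑ k ∈ Finset.range s, n k) + (n s - n (s + 1)) + 2 * b + 1 := by
  simp [kkey, show ¬ s + 1 < s from by omega, show s + 1 ≠ s from by omega]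

lemma exists_part (n : ℕ → ℕ) (t : ℕ) : ∀ i, i < ∑ k ∈ Finset.range t, n k →
    ∃ i' < t, (∑ k ∈ Finset.range i', n k) ≤ i ∧
      i < (∑ k ∈ Finset.range i', n k) + n i' := by
  induction t with
  | zero => simp
  | succ t ih =>
    intro i hi
    rw [Finset.sum_range_succ] at hi
    by_cases h : i < ∑ k ∈ Finset.range t, n k
    · obtain ⟨i', h1, h2, h3⟩ := ih i h
      exact ⟨i', by omega, h2, h3⟩
    · exact ⟨t, by omega, by omega, by omega⟩

/-- There is an edge-coloring of `K_{n₁,…,n_r}` with exactly `n₁+⋯+n_r − 1` colors and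
no rainbow `C₃` or `C₄`. -/
theorem exists_coloring_no_rainbow_C3C4 (r : ℕ) (n : ℕ → ℕ) (hr : 3 ≤ r)
    (hmono : ∀ i j : ℕ, i ≤ j → j < r → n j ≤ n i)
    (hpos : ∀ i : ℕ, i < r → 1 ≤ n i) :
    ∃ c : Sym2 ((i : Fin r) × Fin (n i)) → Fin ((∑ i ∈ Finset.range r, n i) - 1),
      SurjOnEdges (Kpartite r n) c ∧
      ¬ RainbowC3 (Kpartite r n) c ∧ ¬ RainbowC4 (Kpartite r n) c := by
  obtain ⟨s, rfl⟩ : ∃ s, r = s + 2 := ⟨r - 2, by omega⟩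
  have hs1 : 1 ≤ s := by omega
  have hq1 : 1 ≤ n (s + 1) := hpos (s + 1) (by omega)
  have hp1 : 1 ≤ n s := hpos s (by omega)
  have hqp : n (s + 1) ≤ n s := hmono s (s + 1) (by omega) (by omega)
  have hsplit : (∑ i ∈ Finset.range (s + 2), n i)
      = (∑ k ∈ Finset.range s, n k) + n s + n (s + 1) := by
    rw [Finset.sum_range_succ, Finset.sum_range_succ]
  have hS : s ≤ ∑ k ∈ Finset.range s, n k := by
    calc s = ∑ k ∈ Finset.range s, 1 := by simp
    _ ≤ _ := Finset.sum_le_sum fun k hk => hpos k (by simp at hk; omega)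
  have hN : 3 ≤ ∑ i ∈ Finset.range (s + 2), n i := by omega
  have hmain : ∀ i : ℕ, i < (∑ k ∈ Finset.range (s + 2), n k) - 1 →
      ∃ u w : ((i : Fin (s + 2)) × Fin (n i)), (u.1 : ℕ) ≠ (w.1 : ℕ) ∧
        kkey s n u = i ∧ i < kkey s n w := by
    intro i hi
    by_cases h1 : i < ∑ k ∈ Finset.range s, n k
    · obtain ⟨i', hi', hle, hlt⟩ := exists_part n s i h1
      refine ⟨⟨⟨i', by omega⟩, ⟨i - ∑ k ∈ Finset.range i', n k,
                (by omega : i - (∑ k ∈ Finset.range i', n k) < n i')⟩⟩,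
              ⟨⟨s + 1, by omega⟩, ⟨n (s + 1) - 1,
                (by omega : n (s + 1) - 1 < n (s + 1))⟩⟩,
              (by omega : i' ≠ s + 1), ?_, ?_⟩
      · rw [kkey_lo s n i' _ hi']
        omega
      · rw [kkey_hi s n _]
        omega
    · by_cases h2 : i < (∑ k ∈ Finset.range s, n k) + (n s - n (s + 1))
      · refine ⟨⟨⟨s, by omega⟩, ⟨i - ∑ k ∈ Finset.range s, n k,
                  (by omega : i - (∑ k ∈ Finset.range s, n k) < n s)⟩⟩,
                ⟨⟨s + 1, by omega⟩, ⟨0, (by omega : 0 < n (s + 1))⟩⟩,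
                (by omega : s ≠ s + 1), ?_, ?_⟩
        · rw [kkey_mid1 s n _ _ (by omega)]
          omega
        · rw [kkey_hi s n _]
          omega
      · rcases Nat.even_or_odd (i - (∑ k ∈ Finset.range s, n k) - (n s - n (s + 1)))
          with ⟨a, ha⟩ | ⟨a, ha⟩
        · refine ⟨⟨⟨s, by omega⟩, ⟨(n s - n (s + 1)) + a,
                    (by omega : (n s - n (s + 1)) + a < n s)⟩⟩,
                  ⟨⟨s + 1, by omega⟩, ⟨a, (by omega : a < n (s + 1))⟩⟩,
                  (by omega : s ≠ s + 1), ?_, ?_⟩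
          · rw [kkey_mid2 s n _ _ (by omega)]
            omega
          · rw [kkey_hi s n _]
            omega
        · refine ⟨⟨⟨s + 1, by omega⟩, ⟨a, (by omega : a < n (s + 1))⟩⟩,
                  ⟨⟨s, by omega⟩, ⟨(n s - n (s + 1)) + a + 1,
                    (by omega : (n s - n (s + 1)) + a + 1 < n s)⟩⟩,
                  (by omega : s + 1 ≠ s), ?_, ?_⟩
          · rw [kkey_hi s n _]
            omega
          · rw [kkey_mid2 s n _ _ (by omega)]
            omega
  refine ⟨fun e => ⟨min (Sym2.lift ⟨fun u v => min (kkey s n u) (kkey s n v),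
      fun u v => min_comm (kkey s n u) (kkey s n v)⟩ e) ((∑ i ∈ Finset.range (s + 2), n i) - 2),
      by omega⟩, ?_, ?_, ?_⟩
  · intro i
    obtain ⟨u, w, hne, hu, hw⟩ := hmain i.val i.isLt
    refine ⟨s(u, w), ?_, ?_⟩
    · rw [SimpleGraph.mem_edgeSet]
      simp only [Kpartite, SimpleGraph.comap_adj, SimpleGraph.top_adj]
      exact fun h => hne (by rw [h])
    · have hlt := i.isLt
      apply Fin.ext
      simp only [Sym2.lift_mk]
      omega
  · rintro ⟨a, b, d, -, -, -, h1, h2, h3⟩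
    simp only [ne_eq, Sym2.lift_mk, Fin.mk.injEq] at h1 h2 h3
    omega
  · rintro ⟨a, b, d, e, -, -, -, -, -, -, h1, h2, h3, h4, h5, h6⟩
    simp only [ne_eq, Sym2.lift_mk, Fin.mk.injEq] at h1 h2 h3 h4 h5 h6
    omega
end

section
/- For every integer r ≥ 3 and integers n₁ ≥ n₂ ≥ ⋯ ≥ n_r ≥ 1, there exists an edge-coloring of the complete r-partite graph K_{n₁,n₂,…,n_r} using exactly f(n₁,…,n_r) colors that contains no rainbow 3-cycle, where f(n₁,…,n_r) = n₁n₂ + n₃n₄ + ⋯ + n_{r−2}n_{r−1} + n_r + (r−1)/2 − 1 when r is odd and f(n₁,…,n_r) = n₁n₂ + n₃n₄ + ⋯ + n_{r−1}n_r + r/2 − 1 when r is even. -/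
open Finset

abbrev rbV (r : ℕ) (n : ℕ → ℕ) := (i : Fin r) × Fin (n i)

/-- partial sums of products of consecutive pair sizes -/
def rbOS (n : ℕ → ℕ) (k : ℕ) : ℕ := ∑ i ∈ Finset.range k, n (2*i) * n (2*i+1)

/-- total number of colors -/
def rbF (r : ℕ) (n : ℕ → ℕ) : ℕ :=
  rbOS n (r/2) + (if Odd r then n (2*(r/2)) else 0) + (r/2 - 1)

/-- the coloring, as a function to ℕ on ordered pairs of vertices -/
def rbColor (r : ℕ) (n : ℕ → ℕ) (x y : rbV r n) : ℕ :=
  if (x.1:ℕ) / 2 = (y.1:ℕ) / 2 then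
    if (x.1:ℕ) < (y.1:ℕ) then rbOS n ((x.1:ℕ)/2) + (x.2:ℕ) * n ((x.1:ℕ)+1) + (y.2:ℕ)
    else if (y.1:ℕ) < (x.1:ℕ) then rbOS n ((y.1:ℕ)/2) + (y.2:ℕ) * n ((y.1:ℕ)+1) + (x.2:ℕ)
    else 0
  else if (x.1:ℕ) = 2*(r/2) then rbOS n (r/2) + (x.2:ℕ)
  else if (y.1:ℕ) = 2*(r/2) then rbOS n (r/2) + (y.2:ℕ)
  else rbOS n (r/2) + (if Odd r then n (2*(r/2)) else 0) + min ((x.1:ℕ)/2) ((y.1:ℕ)/2)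

lemma rbColor_symm (r : ℕ) (n : ℕ → ℕ) (x y : rbV r n) :
    rbColor r n x y = rbColor r n y x := by
  unfold rbColor
  by_cases h : (x.1:ℕ)/2 = (y.1:ℕ)/2
  · rw [if_pos h, if_pos h.symm]
    rcases lt_trichotomy (x.1:ℕ) (y.1:ℕ) with h1 | h1 | h1
    · rw [if_pos h1, if_neg (not_lt_of_gt h1), if_pos h1]
    · rw [if_neg (by omega), if_neg (by omega), if_neg (by omega), if_neg (by omega)]
    · rw [if_neg (not_lt_of_gt h1), if_pos h1, if_pos h1]
  · rw [if_neg h, if_neg (Ne.symm h)]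
    by_cases hx : (x.1:ℕ) = 2*(r/2) <;> by_cases hy : (y.1:ℕ) = 2*(r/2)
    · omega
    · rw [if_pos hx, if_neg hy, if_pos hx]
    · rw [if_neg hx, if_pos hy, if_pos hy]
    · rw [if_neg hx, if_neg hy, if_neg hy, if_neg hx, Nat.min_comm]


lemma rbOS_mono (n : ℕ → ℕ) {k l : ℕ} (h : k ≤ l) : rbOS n k ≤ rbOS n l :=
  Finset.sum_le_sum_of_subset (Finset.range_subset_range.2 h)

lemma rbOS_succ (n : ℕ → ℕ) (k : ℕ) :
    rbOS n (k+1) = rbOS n k + n (2*k) * n (2*k+1) := Finset.sum_range_succ _ _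

lemma rbOS_pos (r : ℕ) (n : ℕ → ℕ) (hr : 3 ≤ r) (hpos : ∀ i : ℕ, i < r → 1 ≤ n i) :
    1 ≤ rbOS n (r/2) := by
  have h1 : 1 ≤ n 0 * n 1 := Nat.one_le_iff_ne_zero.2 (by
    have := hpos 0 (by omega); have := hpos 1 (by omega); positivity)
  calc 1 ≤ n (2*0) * n (2*0+1) := by simpa using h1
    _ ≤ rbOS n (r/2) := Finset.single_le_sum (f := fun i => n (2*i) * n (2*i+1))
        (fun i _ => Nat.zero_le _) (Finset.mem_range.2 (by omega))

lemma rbColor_lt (r : ℕ) (n : ℕ → ℕ) (hr : 3 ≤ r) (hpos : ∀ i : ℕ, i < r → 1 ≤ n i)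
    (x y : rbV r n) : rbColor r n x y < rbF r n := by
  have hS1 := rbOS_pos r n hr hpos
  have hx1 : (x.1:ℕ) < r := x.1.isLt
  have hy1 : (y.1:ℕ) < r := y.1.isLt
  have hx2 : (x.2:ℕ) < n (x.1:ℕ) := x.2.isLt
  have hy2 : (y.2:ℕ) < n (y.1:ℕ) := y.2.isLt
  unfold rbColor rbF
  by_cases h : (x.1:ℕ)/2 = (y.1:ℕ)/2
  · rw [if_pos h]
    rcases lt_trichotomy (x.1:ℕ) (y.1:ℕ) with h1 | h1 | h1
    · rw [if_pos h1]
      have he : (y.1:ℕ) = (x.1:ℕ) + 1 ∧ (x.1:ℕ) % 2 = 0 := by omega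
      have hk : (x.1:ℕ)/2 + 1 ≤ r/2 := by omega
      have hlt : rbOS n ((x.1:ℕ)/2) + (x.2:ℕ) * n ((x.1:ℕ)+1) + (y.2:ℕ)
          < rbOS n ((x.1:ℕ)/2 + 1) := by
        have h2 : 2 * ((x.1:ℕ)/2) = (x.1:ℕ) := by omega
        have h3 : 2 * ((x.1:ℕ)/2) + 1 = (x.1:ℕ) + 1 := by omega
        rw [rbOS_succ, h2]
        have hby : (y.2:ℕ) < n ((x.1:ℕ)+1) := by rw [← he.1]; exact hy2
        have : (x.2:ℕ) * n ((x.1:ℕ)+1) + (y.2:ℕ) < n (x.1:ℕ) * n ((x.1:ℕ)+1) :=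
          calc (x.2:ℕ) * n ((x.1:ℕ)+1) + (y.2:ℕ)
              < ((x.2:ℕ) + 1) * n ((x.1:ℕ)+1) := by rw [add_mul, one_mul]; omega
            _ ≤ n (x.1:ℕ) * n ((x.1:ℕ)+1) := Nat.mul_le_mul_right _ hx2
        omega
      have := rbOS_mono n hk
      omega
    · rw [if_neg (by omega), if_neg (by omega)]; omega
    · rw [if_neg (by omega), if_pos h1]
      have he : (x.1:ℕ) = (y.1:ℕ) + 1 ∧ (y.1:ℕ) % 2 = 0 := by omega
      have hk : (y.1:ℕ)/2 + 1 ≤ r/2 := by omega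
      have hlt : rbOS n ((y.1:ℕ)/2) + (y.2:ℕ) * n ((y.1:ℕ)+1) + (x.2:ℕ)
          < rbOS n ((y.1:ℕ)/2 + 1) := by
        have h2 : 2 * ((y.1:ℕ)/2) = (y.1:ℕ) := by omega
        have h3 : 2 * ((y.1:ℕ)/2) + 1 = (y.1:ℕ) + 1 := by omega
        rw [rbOS_succ, h2]
        have hbx : (x.2:ℕ) < n ((y.1:ℕ)+1) := by rw [← he.1]; exact hx2
        have : (y.2:ℕ) * n ((y.1:ℕ)+1) + (x.2:ℕ) < n (y.1:ℕ) * n ((y.1:ℕ)+1) :=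
          calc (y.2:ℕ) * n ((y.1:ℕ)+1) + (x.2:ℕ)
              < ((y.2:ℕ) + 1) * n ((y.1:ℕ)+1) := by rw [add_mul, one_mul]; omega
            _ ≤ n (y.1:ℕ) * n ((y.1:ℕ)+1) := Nat.mul_le_mul_right _ hy2
        omega
      have := rbOS_mono n hk
      omega
  · rw [if_neg h]
    by_cases hx : (x.1:ℕ) = 2*(r/2)
    · rw [if_pos hx]
      have hodd : Odd r := by rw [Nat.odd_iff]; omega
      rw [if_pos hodd, ← hx]
      omega
    · rw [if_neg hx]
      by_cases hy : (y.1:ℕ) = 2*(r/2)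
      · rw [if_pos hy]
        have hodd : Odd r := by rw [Nat.odd_iff]; omega
        rw [if_pos hodd, ← hy]
        omega
      · rw [if_neg hy]
        have hbx : (x.1:ℕ)/2 < r/2 := by omega
        have hby : (y.1:ℕ)/2 < r/2 := by omega
        have hmin : min ((x.1:ℕ)/2) ((y.1:ℕ)/2) < r/2 - 1 := by
          rw [Nat.min_def]; split_ifs <;> omega
        omega

lemma rbColor_cross {r : ℕ} {n : ℕ → ℕ} (x y : rbV r n)
    (h : (x.1:ℕ)/2 ≠ (y.1:ℕ)/2) (hx : (x.1:ℕ) ≠ 2*(r/2)) (hy : (y.1:ℕ) ≠ 2*(r/2)) :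
    rbColor r n x y =
      rbOS n (r/2) + (if Odd r then n (2*(r/2)) else 0) + min ((x.1:ℕ)/2) ((y.1:ℕ)/2) := by
  unfold rbColor; rw [if_neg h, if_neg hx, if_neg hy]

lemma rbColor_sl {r : ℕ} {n : ℕ → ℕ} (x y : rbV r n)
    (h : (x.1:ℕ)/2 ≠ (y.1:ℕ)/2) (hx : (x.1:ℕ) = 2*(r/2)) :
    rbColor r n x y = rbOS n (r/2) + (x.2:ℕ) := by
  unfold rbColor; rw [if_neg h, if_pos hx]

lemma rbColor_sr {r : ℕ} {n : ℕ → ℕ} (x y : rbV r n)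
    (h : (x.1:ℕ)/2 ≠ (y.1:ℕ)/2) (hx : (x.1:ℕ) ≠ 2*(r/2)) (hy : (y.1:ℕ) = 2*(r/2)) :
    rbColor r n x y = rbOS n (r/2) + (y.2:ℕ) := by
  unfold rbColor; rw [if_neg h, if_neg hx, if_pos hy]

lemma rbColor_noRainbow (r : ℕ) (n : ℕ → ℕ) (a b d : rbV r n)
    (hab : (a.1:ℕ) ≠ (b.1:ℕ)) (hbd : (b.1:ℕ) ≠ (d.1:ℕ)) (hda : (d.1:ℕ) ≠ (a.1:ℕ)) :
    rbColor r n a b = rbColor r n b d ∨ rbColor r n b d = rbColor r n d a ∨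
      rbColor r n a b = rbColor r n d a := by
  have hia : (a.1:ℕ) < r := a.1.isLt
  have hib : (b.1:ℕ) < r := b.1.isLt
  have hid : (d.1:ℕ) < r := d.1.isLt
  by_cases hAB : (a.1:ℕ)/2 = (b.1:ℕ)/2
  · -- d is in a different block from both a and b
    have hDA : (d.1:ℕ)/2 ≠ (a.1:ℕ)/2 := by omega
    have hDB : (d.1:ℕ)/2 ≠ (b.1:ℕ)/2 := by omega
    have hA2 : (a.1:ℕ) ≠ 2*(r/2) := by omega
    have hB2 : (b.1:ℕ) ≠ 2*(r/2) := by omega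
    right; left
    by_cases hD2 : (d.1:ℕ) = 2*(r/2)
    · rw [rbColor_sr b d (Ne.symm hDB) hB2 hD2, rbColor_sl d a hDA hD2]
    · rw [rbColor_cross b d (Ne.symm hDB) hB2 hD2, rbColor_cross d a hDA hD2 hA2]
      rw [hAB, Nat.min_comm]
  · by_cases hBD : (b.1:ℕ)/2 = (d.1:ℕ)/2
    · have hAB' : (a.1:ℕ)/2 ≠ (b.1:ℕ)/2 := hAB
      have hAD : (a.1:ℕ)/2 ≠ (d.1:ℕ)/2 := by omega
      have hB2 : (b.1:ℕ) ≠ 2*(r/2) := by omega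
      have hD2 : (d.1:ℕ) ≠ 2*(r/2) := by omega
      right; right
      by_cases hA2 : (a.1:ℕ) = 2*(r/2)
      · rw [rbColor_sl a b hAB' hA2, rbColor_sr d a (Ne.symm hAD) hD2 hA2]
      · rw [rbColor_cross a b hAB' hA2 hB2, rbColor_cross d a (Ne.symm hAD) hD2 hA2]
        rw [← hBD, Nat.min_comm ((b.1:ℕ)/2)]
    · by_cases hDA2 : (d.1:ℕ)/2 = (a.1:ℕ)/2
      · have hA2 : (a.1:ℕ) ≠ 2*(r/2) := by omega
        have hD2 : (d.1:ℕ) ≠ 2*(r/2) := by omega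
        left
        by_cases hB2 : (b.1:ℕ) = 2*(r/2)
        · rw [rbColor_sr a b (by omega) hA2 hB2, rbColor_sl b d (by omega) hB2]
        · rw [rbColor_cross a b (by omega) hA2 hB2, rbColor_cross b d (by omega) hB2 hD2]
          rw [← hDA2, Nat.min_comm]
      · -- all three blocks distinct
        by_cases hA2 : (a.1:ℕ) = 2*(r/2)
        · have hB2 : (b.1:ℕ) ≠ 2*(r/2) := by omega
          have hD2 : (d.1:ℕ) ≠ 2*(r/2) := by omega
          right; right
          rw [rbColor_sl a b hAB hA2, rbColor_sr d a hDA2 hD2 hA2]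
        · by_cases hB2 : (b.1:ℕ) = 2*(r/2)
          · have hD2 : (d.1:ℕ) ≠ 2*(r/2) := by omega
            left
            rw [rbColor_sr a b hAB hA2 hB2, rbColor_sl b d (by omega) hB2]
          · by_cases hD2 : (d.1:ℕ) = 2*(r/2)
            · right; left
              rw [rbColor_sr b d (by omega) hB2 hD2, rbColor_sl d a hDA2 hD2]
            · rw [rbColor_cross a b hAB hA2 hB2, rbColor_cross b d (by omega) hB2 hD2,
                rbColor_cross d a hDA2 hD2 hA2]
              simp only [Nat.add_right_cancel_iff, Nat.add_left_cancel_iff, Nat.min_def]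
              split_ifs <;> omega

lemma rbColor_pair {r : ℕ} {n : ℕ → ℕ} (x y : rbV r n)
    (hxy : (y.1:ℕ) = (x.1:ℕ)+1) (hx : (x.1:ℕ) % 2 = 0) :
    rbColor r n x y = rbOS n ((x.1:ℕ)/2) + (x.2:ℕ) * n ((x.1:ℕ)+1) + (y.2:ℕ) := by
  unfold rbColor; rw [if_pos (by omega), if_pos (by omega)]

lemma rb_exists_partial (g : ℕ → ℕ) (p t : ℕ) (ht : t < ∑ i ∈ Finset.range p, g i) :
    ∃ k, k < p ∧ ∑ i ∈ Finset.range k, g i ≤ t ∧ t < ∑ i ∈ Finset.range k, g i + g k := by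
  induction p with
  | zero => simp at ht
  | succ p ih =>
    by_cases h : t < ∑ i ∈ Finset.range p, g i
    · obtain ⟨k, hk, ha, hb⟩ := ih h
      exact ⟨k, by omega, ha, hb⟩
    · exact ⟨p, by omega, Nat.le_of_not_lt h, by rwa [Finset.sum_range_succ] at ht⟩

lemma Kpartite_adj {r : ℕ} {n : ℕ → ℕ} {x y : rbV r n} :
    (Kpartite r n).Adj x y ↔ x.1 ≠ y.1 := Iff.rfl

/-- There is an edge-coloring of `K_{n₁,…,n_r}` with exactly `f(n₁,…,n_r)` colors and no
rainbow triangle. -/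
theorem exists_coloring_no_rainbow_C3 (r : ℕ) (n : ℕ → ℕ) (hr : 3 ≤ r)
    (hmono : ∀ i j : ℕ, i ≤ j → j < r → n j ≤ n i)
    (hpos : ∀ i : ℕ, i < r → 1 ≤ n i) :
    ∃ c : Sym2 ((i : Fin r) × Fin (n i)) →
      Fin (if Odd r then
            (∑ i ∈ Finset.range ((r - 1) / 2), n (2 * i) * n (2 * i + 1)) + n (r - 1)
              + (r - 1) / 2 - 1
           else
            (∑ i ∈ Finset.range (r / 2), n (2 * i) * n (2 * i + 1)) + r / 2 - 1),
      SurjOnEdges (Kpartite r n) c ∧ ¬ RainbowC3 (Kpartite r n) c := by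
  have hp1 : 1 ≤ r / 2 := by omega
  have hS1 := rbOS_pos r n hr hpos
  have hF : (if Odd r then
        (∑ i ∈ Finset.range ((r - 1) / 2), n (2 * i) * n (2 * i + 1)) + n (r - 1)
          + (r - 1) / 2 - 1
       else
        (∑ i ∈ Finset.range (r / 2), n (2 * i) * n (2 * i + 1)) + r / 2 - 1) = rbF r n := by
    by_cases hodd : Odd r
    · have ho := Nat.odd_iff.mp hodd
      rw [if_pos hodd, rbF, if_pos hodd,
        show (r-1)/2 = r/2 from by omega, show r - 1 = 2*(r/2) from by omega, ← rbOS]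
      omega
    · rw [if_neg hodd, rbF, if_neg hodd, ← rbOS]
      omega
  rw [hF]
  refine ⟨Sym2.lift ⟨fun x y => ⟨rbColor r n x y, rbColor_lt r n hr hpos x y⟩,
    fun x y => Fin.ext (rbColor_symm r n x y)⟩, ?_, ?_⟩
  · -- surjectivity
    intro i
    have hti : (i : ℕ) < rbF r n := i.isLt
    by_cases h1 : (i : ℕ) < rbOS n (r/2)
    · obtain ⟨k, hk, hle, hlt⟩ :=
        rb_exists_partial (fun j => n (2*j) * n (2*j+1)) (r/2) (i : ℕ) h1
      rw [show (∑ j ∈ Finset.range k, n (2*j) * n (2*j+1)) = rbOS n k from rfl] at hle hlt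
      have hk2 : 2*k+1 < r := by omega
      have hm : 0 < n (2*k+1) := hpos _ hk2
      have hq : (i:ℕ) - rbOS n k < n (2*k) * n (2*k+1) := by omega
      have ha : ((i:ℕ) - rbOS n k) / n (2*k+1) < n (2*k) :=
        Nat.div_lt_of_lt_mul (by rw [Nat.mul_comm]; exact hq)
      have hb : ((i:ℕ) - rbOS n k) % n (2*k+1) < n (2*k+1) := Nat.mod_lt _ hm
      refine ⟨s(⟨⟨2*k, by omega⟩, ⟨((i:ℕ) - rbOS n k) / n (2*k+1), ha⟩⟩,
        ⟨⟨2*k+1, hk2⟩, ⟨((i:ℕ) - rbOS n k) % n (2*k+1), hb⟩⟩), ?_, ?_⟩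
      · rw [SimpleGraph.mem_edgeSet, Kpartite_adj]
        intro h
        have h2 : (2*k : ℕ) = 2*k+1 := congrArg Fin.val h
        omega
      · rw [Sym2.lift_mk]
        apply Fin.ext
        have key : rbColor r n ⟨⟨2*k, by omega⟩, ⟨((i:ℕ) - rbOS n k) / n (2*k+1), ha⟩⟩
            ⟨⟨2*k+1, hk2⟩, ⟨((i:ℕ) - rbOS n k) % n (2*k+1), hb⟩⟩ = (i:ℕ) := by
          rw [rbColor_pair _ _ rfl (by show 2*k % 2 = 0; omega)]
          show rbOS n (2*k/2) + ((i:ℕ) - rbOS n k) / n (2*k+1) * n (2*k+1)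
            + ((i:ℕ) - rbOS n k) % n (2*k+1) = (i:ℕ)
          rw [show 2*k/2 = k from by omega]
          have hdm : ((i:ℕ) - rbOS n k) / n (2*k+1) * n (2*k+1)
              + ((i:ℕ) - rbOS n k) % n (2*k+1) = (i:ℕ) - rbOS n k := by
            rw [Nat.mul_comm]; exact Nat.div_add_mod _ _
          omega
        exact key
    · by_cases h2 : (i:ℕ) < rbOS n (r/2) + (if Odd r then n (2*(r/2)) else 0)
      · -- singleton part color; r must be odd
        have hodd : Odd r := by
          by_contra h; rw [if_neg h] at h2; omega
        rw [if_pos hodd] at h2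
        have ho := Nat.odd_iff.mp hodd
        have h2p : 2*(r/2) < r := by omega
        have hv : (i:ℕ) - rbOS n (r/2) < n (2*(r/2)) := by omega
        refine ⟨s(⟨⟨2*(r/2), h2p⟩, ⟨(i:ℕ) - rbOS n (r/2), hv⟩⟩,
          ⟨⟨0, by omega⟩, ⟨0, hpos 0 (by omega)⟩⟩), ?_, ?_⟩
        · rw [SimpleGraph.mem_edgeSet, Kpartite_adj]
          intro h
          have h3 : (2*(r/2) : ℕ) = 0 := congrArg Fin.val h
          omega
        · rw [Sym2.lift_mk]
          apply Fin.ext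
          have key : rbColor r n ⟨⟨2*(r/2), h2p⟩, ⟨(i:ℕ) - rbOS n (r/2), hv⟩⟩
              ⟨⟨0, by omega⟩, ⟨0, hpos 0 (by omega)⟩⟩ = (i:ℕ) := by
            rw [rbColor_sl _ _ (by show 2*(r/2)/2 ≠ 0/2; omega) rfl]
            show rbOS n (r/2) + ((i:ℕ) - rbOS n (r/2)) = (i:ℕ)
            omega
          exact key
      · -- cross-block color
        have hk : (i:ℕ) - (rbOS n (r/2) + (if Odd r then n (2*(r/2)) else 0)) < r/2 - 1 := by
          unfold rbF at hti; omega
        set B := rbOS n (r/2) + (if Odd r then n (2*(r/2)) else 0) with hB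
        set k := (i:ℕ) - B with hkdef
        have hx : 2*k < r := by omega
        have hy : 2*k+2 < r := by omega
        refine ⟨s(⟨⟨2*k, hx⟩, ⟨0, hpos _ hx⟩⟩, ⟨⟨2*k+2, hy⟩, ⟨0, hpos _ hy⟩⟩), ?_, ?_⟩
        · rw [SimpleGraph.mem_edgeSet, Kpartite_adj]
          intro h
          have h3 : (2*k : ℕ) = 2*k+2 := congrArg Fin.val h
          omega
        · rw [Sym2.lift_mk]
          apply Fin.ext
          have key : rbColor r n ⟨⟨2*k, hx⟩, ⟨0, hpos _ hx⟩⟩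
              ⟨⟨2*k+2, hy⟩, ⟨0, hpos _ hy⟩⟩ = (i:ℕ) := by
            rw [rbColor_cross _ _ (by show 2*k/2 ≠ (2*k+2)/2; omega)
              (by show 2*k ≠ 2*(r/2); omega) (by show 2*k+2 ≠ 2*(r/2); omega)]
            show B + min (2*k/2) ((2*k+2)/2) = (i:ℕ)
            rw [show 2*k/2 = k from by omega, show (2*k+2)/2 = k+1 from by omega,
              Nat.min_eq_left (by omega)]
            omega
          exact key
  · -- no rainbow triangle
    rintro ⟨a, b, d, hab, hbd, hda, h1, h2, h3⟩
    have hab' : (a.1:ℕ) ≠ (b.1:ℕ) := fun h => (Kpartite_adj.mp hab) (Fin.ext h)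
    have hbd' : (b.1:ℕ) ≠ (d.1:ℕ) := fun h => (Kpartite_adj.mp hbd) (Fin.ext h)
    have hda' : (d.1:ℕ) ≠ (a.1:ℕ) := fun h => (Kpartite_adj.mp hda) (Fin.ext h)
    rcases rbColor_noRainbow r n a b d hab' hbd' hda' with h | h | h
    · exact h1 (by rw [Sym2.lift_mk, Sym2.lift_mk]; exact Fin.ext h)
    · exact h2 (by rw [Sym2.lift_mk, Sym2.lift_mk]; exact Fin.ext h)
    · exact h3 (by rw [Sym2.lift_mk, Sym2.lift_mk]; exact Fin.ext h)
end

section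
/- For every integer r ≥ 3 and integers n₁ ≥ n₂ ≥ ⋯ ≥ n_r ≥ 1, there exists an edge-coloring of the complete r-partite graph K_{n₁,n₂,…,n_r} using exactly n₁ + n₂ + ⋯ + n_r + t − 1 colors that contains no rainbow 4-cycle, where t = min{ ⌊(n₁+⋯+n_r)/3⌋, ⌊(n₂+⋯+n_r)/2⌋, n₃+⋯+n_r }. -/
open Finset

/-
Pack `t` vertex-disjoint triangles into the graph and give triangle `g` the level `g`, every
other vertex a level of its own above all triangles. Colour an edge inside a level by itself
and any other edge by the larger level of its ends. In a `C₄` the top level is taken by one,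
two or three of the four vertices, so at least two cycle edges leave it, and both get the
colour of that level. On `N` vertices, the `3t` triangle edges and the `N - 2t - 1` levels
above the bottom triangle give `N + t - 1` distinct colours, each level being joined to the
bottom triangle, which every vertex sees. In `K_{n₁,…,n_r}` the triangles come from writing the first
`min(nᵢ, t)` vertices of each part in a row and taking the positions `g, g + t, g + 2t`: two
vertices of one part are fewer than `t` positions apart.
-/

open Function

section FiberColoring

variable {V β : Type*} [LinearOrder β]

def fiberColoring (π : V → β) : Sym2 V → Sym2 V ⊕ β :=
  Sym2.lift ⟨fun x y => if π x = π y then .inl s(x, y) else .inr (max (π x) (π y)),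
    fun x y => by simp only [eq_comm (a := π x), Sym2.eq_swap (a := x), max_comm]⟩

variable {π : V → β}

theorem fiberColoring_mk (x y : V) : fiberColoring π s(x, y) =
    if π x = π y then .inl s(x, y) else .inr (max (π x) (π y)) := rfl

theorem fiberColoring_of_lt {x y : V} (h : π x < π y) : fiberColoring π s(x, y) = .inr (π y) := by
  rw [fiberColoring_mk, if_neg h.ne, max_eq_right h.le]

theorem fiberColoring_of_eq {x y : V} (h : π x = π y) : fiberColoring π s(x, y) = .inl s(x, y) :=
  if_pos h

theorem not_rainbowC4_fiberColoring (G : SimpleGraph V) (hπ : ∀ b, (π ⁻¹' {b}).encard ≤ 3) :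
    ¬ RainbowC4 G (fiberColoring π) := by
  rintro ⟨a, b, d, e, hab, hbd, hde, hea, had, hbe, h1, h2, h3, h4, h5, h6⟩
  set μ := max (max (π a) (π b)) (max (π d) (π e))
  have ha : π a ≤ μ := le_max_of_le_left (le_max_left _ _)
  have hb : π b ≤ μ := le_max_of_le_left (le_max_right _ _)
  have hd : π d ≤ μ := le_max_of_le_right (le_max_left _ _)
  have he : π e ≤ μ := le_max_of_le_right (le_max_right _ _)
  let top : V → Bool := fun v => decide (π v = μ)
  have cut : ∀ {x y}, π x ≤ μ → π y ≤ μ → top x ≠ top y → fiberColoring π s(x, y) = .inr μ := by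
    intro x y hx hy hxy
    rcases hx.eq_or_lt with hx | hx <;> rcases hy.eq_or_lt with hy | hy
    · simp [top, hx, hy] at hxy
    · rw [Sym2.eq_swap, ← hx]; exact fiberColoring_of_lt (hx ▸ hy)
    · rw [← hy]; exact fiberColoring_of_lt (hy ▸ hx)
    · simp [top, hx.ne, hy.ne] at hxy
  have not_all : ¬ (top a ∧ top b ∧ top d ∧ top e) := by
    simp only [top, decide_eq_true_eq]
    rintro ⟨ha, hb, hd, he⟩
    have h4 : ({a, b, d, e} : Set V).encard = 4 :=
      Set.encard_eq_four.2 ⟨a, b, d, e, hab.ne, had, hea.ne', hbd.ne, hbe, hde.ne, rfl⟩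
    have hsub : ({a, b, d, e} : Set V) ⊆ π ⁻¹' {μ} := by
      simp [Set.insert_subset_iff, ha, hb, hd, he]
    have := (Set.encard_le_encard hsub).trans (hπ μ)
    rw [h4] at this
    exact absurd this (by decide)
  have some : top a ∨ top b ∨ top d ∨ top e := by
    simp only [top, decide_eq_true_eq]
    rcases max_choice (max (π a) (π b)) (max (π d) (π e)) with h | h
    · rcases max_choice (π a) (π b) with h' | h'
      exacts [.inl (h.trans h').symm, .inr (.inl (h.trans h').symm)]
    · rcases max_choice (π d) (π e) with h' | h'
      exacts [.inr (.inr (.inl (h.trans h').symm)), .inr (.inr (.inr (h.trans h').symm))]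
  -- a proper nonempty set of vertices of a 4-cycle is left by at least two of its edges
  have boundary : ∀ p q r s : Bool, ¬ (p ∧ q ∧ r ∧ s) → (p ∨ q ∨ r ∨ s) →
      (p ≠ q ∧ q ≠ r) ∨ (p ≠ q ∧ r ≠ s) ∨ (p ≠ q ∧ s ≠ p) ∨ (q ≠ r ∧ r ≠ s) ∨
        (q ≠ r ∧ s ≠ p) ∨ (r ≠ s ∧ s ≠ p) := by
    decide
  rcases boundary _ _ _ _ not_all some with ⟨h, h'⟩ | ⟨h, h'⟩ | ⟨h, h'⟩ | ⟨h, h'⟩ | ⟨h, h'⟩ |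
    ⟨h, h'⟩
  · exact h1 ((cut ha hb h).trans (cut hb hd h').symm)
  · exact h2 ((cut ha hb h).trans (cut hd he h').symm)
  · exact h3 ((cut ha hb h).trans (cut he ha h').symm)
  · exact h4 ((cut hb hd h).trans (cut hd he h').symm)
  · exact h5 ((cut hb hd h).trans (cut he ha h').symm)
  · exact h6 ((cut hd he h).trans (cut he ha h').symm)

end FiberColoring

section Recoloring

variable {V α γ : Type*} {G : SimpleGraph V} {c : Sym2 V → α}

theorem RainbowC4.of_comp {f : α → γ} (h : RainbowC4 G (f ∘ c)) : RainbowC4 G c := by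
  obtain ⟨a, b, d, e, hab, hbd, hde, hea, had, hbe, h1, h2, h3, h4, h5, h6⟩ := h
  exact ⟨a, b, d, e, hab, hbd, hde, hea, had, hbe, ne_of_apply_ne f h1, ne_of_apply_ne f h2,
    ne_of_apply_ne f h3, ne_of_apply_ne f h4, ne_of_apply_ne f h5, ne_of_apply_ne f h6⟩

theorem exists_surjOnEdges_comp {ι : Type*} [Fintype ι] [Nonempty ι] {k : ℕ} (w : ι → Sym2 V)
    (hw : ∀ i, w i ∈ G.edgeSet) (hinj : Injective (c ∘ w)) (hk : Fintype.card ι = k) :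
    ∃ f : α → Fin k, SurjOnEdges G (f ∘ c) := by
  let e := Fintype.equivFinOfCardEq hk
  refine ⟨e ∘ invFun (c ∘ w), fun i => ⟨w (e.symm i), hw _, ?_⟩⟩
  simp only [comp_apply]
  rw [← comp_apply (f := c), leftInverse_invFun hinj, Equiv.apply_symm_apply]

end Recoloring

section TrianglePacking

variable {V : Type*} {s : ℕ} (τ : Fin (s + 1) × Fin 3 ↪ V)

def triangleEdge (p : Fin (s + 1) × Fin 3) : Sym2 V := s(τ p, τ (p.1, p.2 + 1))

variable {τ} in
theorem triangleEdge_injective : Injective (triangleEdge τ) := by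
  rintro ⟨g, j⟩ ⟨g', j'⟩ h
  rcases Sym2.eq_iff.1 h with ⟨h, -⟩ | ⟨h, h'⟩
  · exact τ.injective h
  · obtain ⟨-, hj⟩ := Prod.ext_iff.1 (τ.injective h)
    obtain ⟨-, rfl⟩ := Prod.ext_iff.1 (τ.injective h')
    have : ∀ j : Fin 3, j ≠ j + 1 + 1 := by decide
    exact absurd hj (this j)

variable [Fintype V]

open Classical in
noncomputable def triangleLevel (x : V) : ℕ :=
  if x ∈ Set.range τ then (invFun τ x).1 else s + 1 + Fintype.equivFin V x

variable {τ}

theorem triangleLevel_apply (p : Fin (s + 1) × Fin 3) : triangleLevel τ (τ p) = p.1 := by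
  simp [triangleLevel, leftInverse_invFun τ.injective p]

theorem triangleLevel_of_notMem {x : V} (hx : x ∉ Set.range τ) :
    triangleLevel τ x = s + 1 + Fintype.equivFin V x := by
  simp [triangleLevel, hx]

theorem encard_triangleLevel_preimage_le (b : ℕ) : (triangleLevel τ ⁻¹' {b}).encard ≤ 3 := by
  by_cases hb : b < s + 1
  · have hsub : triangleLevel τ ⁻¹' {b} ⊆ Set.range fun j => τ (⟨b, hb⟩, j) := by
      intro x hx
      by_cases hxτ : x ∈ Set.range τ
      · obtain ⟨⟨g, j⟩, rfl⟩ := hxτ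
        obtain rfl : g = ⟨b, hb⟩ := Fin.ext (by simpa [triangleLevel_apply] using hx)
        exact ⟨j, rfl⟩
      · simp [triangleLevel_of_notMem hxτ] at hx
        omega
    calc (triangleLevel τ ⁻¹' {b}).encard ≤ (Set.range fun j => τ (⟨b, hb⟩, j)).encard :=
          Set.encard_le_encard hsub
      _ ≤ (Set.univ : Set (Fin 3)).encard := by
          rw [← Set.image_univ]; exact Set.encard_image_le _ _
      _ = 3 := by simp
  · refine le_trans (Set.encard_le_one_iff.2 fun x y hx hy => ?_) (by norm_num)
    have level_gt : ∀ z ∈ triangleLevel τ ⁻¹' {b}, z ∉ Set.range τ := by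
      rintro _ hz ⟨p, rfl⟩
      simp [triangleLevel_apply] at hz
      omega
    have : triangleLevel τ x = triangleLevel τ y := (hx : _ = b).trans (hy : _ = b).symm
    rw [triangleLevel_of_notMem (level_gt x hx), triangleLevel_of_notMem (level_gt y hy)] at this
    exact (Fintype.equivFin V).injective (Fin.ext (by omega))

theorem fiberColoring_triangleEdge (p : Fin (s + 1) × Fin 3) :
    fiberColoring (triangleLevel τ) (triangleEdge τ p) = .inl (triangleEdge τ p) :=
  fiberColoring_of_eq (by simp [triangleLevel_apply])

theorem fiberColoring_triangleLevel_bottom {x : V} (hx : 0 < triangleLevel τ x) (j : Fin 3) :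
    fiberColoring (triangleLevel τ) s(x, τ (0, j)) = .inr (triangleLevel τ x) := by
  rw [Sym2.eq_swap]
  exact fiberColoring_of_lt (by rwa [triangleLevel_apply])

variable (τ) in
def levelRep : {x // x ∉ Set.range τ} ⊕ Fin s → V := Sum.elim Subtype.val fun i => τ (i.succ, 0)

theorem triangleLevel_levelRep (u : {x // x ∉ Set.range τ} ⊕ Fin s) :
    triangleLevel τ (levelRep τ u) =
      Sum.elim (fun x : {x // x ∉ Set.range τ} => s + 1 + (Fintype.equivFin V x.1 : ℕ))
        (fun i : Fin s => (i : ℕ) + 1) u := by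
  rcases u with ⟨x, hx⟩ | i
  · exact triangleLevel_of_notMem hx
  · exact triangleLevel_apply _

theorem triangleLevel_levelRep_pos (u : {x // x ∉ Set.range τ} ⊕ Fin s) :
    0 < triangleLevel τ (levelRep τ u) := by
  rw [triangleLevel_levelRep]
  rcases u <;> simp

theorem injective_triangleLevel_comp_levelRep : Injective (triangleLevel τ ∘ levelRep τ) := by
  rintro (⟨x, hx⟩ | i) (⟨y, hy⟩ | j) h <;>
    simp only [comp_apply, triangleLevel_levelRep, Sum.elim_inl, Sum.elim_inr] at h
  · simpa using (Fintype.equivFin V).injective (Fin.ext (by omega))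
  · omega
  · omega
  · exact congrArg Sum.inr (Fin.ext (by omega))

variable (τ) in
theorem exists_coloring_of_triangles (G : SimpleGraph V) {k : ℕ}
    (hτ : ∀ g (j j' : Fin 3), j ≠ j' → G.Adj (τ (g, j)) (τ (g, j')))
    (hdom : ∀ x, ∃ j, G.Adj x (τ (0, j))) (hk : Fintype.card V + s = k) :
    ∃ c : Sym2 V → Fin k, SurjOnEdges G c ∧ ¬ RainbowC4 G c := by
  classical
  let down (x : V) : Sym2 V := s(x, τ (0, (hdom x).choose))
  let w := Sum.elim (triangleEdge τ) (down ∘ levelRep τ)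
  have color_w : fiberColoring (triangleLevel τ) ∘ w =
      Sum.map (triangleEdge τ) (triangleLevel τ ∘ levelRep τ) := by
    ext1 (p | u)
    · exact fiberColoring_triangleEdge p
    · exact fiberColoring_triangleLevel_bottom (triangleLevel_levelRep_pos u) _
  have hw : ∀ i, w i ∈ G.edgeSet := by
    rintro (⟨g, j⟩ | u)
    · exact hτ g j (j + 1) (by revert j; decide)
    · exact (hdom (levelRep τ u)).choose_spec
  have hcard : Fintype.card ((Fin (s + 1) × Fin 3) ⊕ ({x // x ∉ Set.range τ} ⊕ Fin s)) = k := by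
    have := Fintype.card_le_of_embedding τ
    simp only [Fintype.card_sum, Fintype.card_prod, Fintype.card_fin,
      Fintype.card_subtype_compl, Set.card_range_of_injective τ.injective] at this ⊢
    omega
  obtain ⟨f, hf⟩ := exists_surjOnEdges_comp w hw
    (color_w ▸ triangleEdge_injective.sumMap injective_triangleLevel_comp_levelRep) hcard
  exact ⟨f ∘ fiberColoring (triangleLevel τ), hf,
    fun h => not_rainbowC4_fiberColoring G encard_triangleLevel_preimage_le h.of_comp⟩

end TrianglePacking

theorem mul_le_sum_min_of_antitoneOn {n : ℕ → ℕ} {r t : ℕ} (hn : AntitoneOn n (Set.Iio r))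
    (k a : ℕ) (h : ∀ j < k, (k - j) * t ≤ ∑ i ∈ Ico (a + j) r, n i) :
    k * t ≤ ∑ i ∈ Ico a r, min (n i) t := by
  induction k generalizing a with
  | zero => simp
  | succ k ih =>
    by_cases hsmall : ∀ i ∈ Ico a r, n i < t
    · rw [sum_congr rfl fun i hi => min_eq_left (hsmall i hi).le]
      simpa using h 0 k.succ_pos
    push Not at hsmall
    obtain ⟨i, hi, hti⟩ := hsmall
    obtain ⟨hai, hir⟩ := mem_Ico.1 hi
    have hta : t ≤ n a := hti.trans (hn (hai.trans_lt hir) hir hai)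
    rw [sum_eq_sum_Ico_succ_bot (hai.trans_lt hir), min_eq_right hta, Nat.succ_mul, add_comm]
    gcongr
    refine ih (a + 1) fun j hj => ?_
    have := h (j + 1) (by omega)
    rwa [Nat.add_sub_add_right, ← add_assoc, add_right_comm] at this

theorem finSigmaFinEquiv_val_lt_of_fst_eq {r : ℕ} {m : Fin r → ℕ} {x y : (i : Fin r) × Fin (m i)}
    (h : x.1 = y.1) : (finSigmaFinEquiv x : ℕ) < finSigmaFinEquiv y + m x.1 := by
  obtain ⟨i, a⟩ := x
  obtain ⟨i', b⟩ := y
  obtain rfl : i = i' := h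
  simp only [finSigmaFinEquiv_apply]
  omega

theorem exists_transversal_triangles {r t : ℕ} {n : Fin r → ℕ} (h : 3 * t ≤ ∑ i, min (n i) t) :
    ∃ τ : Fin t × Fin 3 ↪ (i : Fin r) × Fin (n i),
      ∀ g (j j' : Fin 3), j ≠ j' → (τ (g, j)).1 ≠ (τ (g, j')).1 := by
  let incl : ((i : Fin r) × Fin (min (n i) t)) ↪ (i : Fin r) × Fin (n i) :=
    (Embedding.refl _).sigmaMap fun _ => Fin.castLEEmb (min_le_left _ _)
  -- `layout (g, j)` is the position `g + t * j` of the row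
  let layout : Fin t × Fin 3 ↪ Fin (∑ i, min (n i) t) :=
    (Equiv.prodComm _ _).toEmbedding.trans (finProdFinEquiv.toEmbedding.trans (Fin.castLEEmb h))
  refine ⟨layout.trans (finSigmaFinEquiv.symm.toEmbedding.trans incl), fun g j j' hjj' hpart => ?_⟩
  set x := finSigmaFinEquiv.symm (layout (g, j))
  set y := finSigmaFinEquiv.symm (layout (g, j'))
  have hx : (finSigmaFinEquiv x : ℕ) = g + t * j := by simp [x, layout]
  have hy : (finSigmaFinEquiv y : ℕ) = g + t * j' := by simp [y, layout]
  have hxy := finSigmaFinEquiv_val_lt_of_fst_eq (x := x) (y := y) hpart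
  have hyx := finSigmaFinEquiv_val_lt_of_fst_eq (x := y) (y := x) hpart.symm
  have hmx : min (n x.1) t ≤ t := min_le_right _ _
  have hmy : min (n y.1) t ≤ t := min_le_right _ _
  rcases lt_or_gt_of_ne (Fin.val_ne_of_ne hjj') with hlt | hlt <;>
    have := Nat.mul_le_mul_left t hlt <;> rw [Nat.mul_succ] at this <;> omega

theorem Kpartite_adj_or_adj {r : ℕ} {n : ℕ → ℕ} {a b : (i : Fin r) × Fin (n i)}
    (hab : (Kpartite r n).Adj a b) (x : (i : Fin r) × Fin (n i)) :
    (Kpartite r n).Adj x a ∨ (Kpartite r n).Adj x b := by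
  by_cases hx : x.1 = a.1
  · exact .inr fun h => hab (hx.symm.trans h)
  · exact .inl hx

/-- There is an edge-coloring of `K_{n₁,…,n_r}` with exactly `n₁+⋯+n_r + t − 1` colors
and no rainbow `C₄`, where
`t = min{⌊(n₁+⋯+n_r)/3⌋, ⌊(n₂+⋯+n_r)/2⌋, n₃+⋯+n_r}`. -/
theorem exists_coloring_no_rainbow_C4 (r : ℕ) (n : ℕ → ℕ) (hr : 3 ≤ r)
    (hmono : ∀ i j : ℕ, i ≤ j → j < r → n j ≤ n i)
    (hpos : ∀ i : ℕ, i < r → 1 ≤ n i) :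
    ∃ c : Sym2 ((i : Fin r) × Fin (n i)) →
      Fin ((∑ i ∈ Finset.range r, n i) +
        min (min ((∑ i ∈ Finset.range r, n i) / 3) ((∑ i ∈ Finset.Ico 1 r, n i) / 2))
          (∑ i ∈ Finset.Ico 2 r, n i) - 1),
      SurjOnEdges (Kpartite r n) c ∧ ¬ RainbowC4 (Kpartite r n) c := by
  set t := min (min ((∑ i ∈ range r, n i) / 3) ((∑ i ∈ Ico 1 r, n i) / 2))
    (∑ i ∈ Ico 2 r, n i)
  have tail_ge : ∀ a, r - a ≤ ∑ i ∈ Ico a r, n i := fun a => by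
    simpa using card_nsmul_le_sum (Ico a r) n 1 fun i hi => hpos i (mem_Ico.1 hi).2
  obtain ⟨s, hs⟩ : ∃ s, t = s + 1 := Nat.exists_eq_add_one.2 (by
    have := tail_ge 0; have := tail_ge 1; have := tail_ge 2
    simp only [t, range_eq_Ico]
    omega)
  have hpack : 3 * (s + 1) ≤ ∑ i : Fin r, min (n i) (s + 1) := by
    rw [Fin.sum_univ_eq_sum_range (fun i => min (n i) (s + 1)), range_eq_Ico, ← hs]
    refine mul_le_sum_min_of_antitoneOn (fun i _ j hj hij => hmono i j hij hj) 3 0 fun j hj => ?_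
    simp only [t, range_eq_Ico] at hs ⊢
    interval_cases j <;> simp only [zero_add] <;> omega
  obtain ⟨τ, hτ⟩ := exists_transversal_triangles hpack
  refine exists_coloring_of_triangles τ (Kpartite r n) hτ (fun x => ?_) ?_
  · rcases Kpartite_adj_or_adj (hτ 0 0 1 (by decide)) x with h | h
    exacts [⟨0, h⟩, ⟨1, h⟩]
  · simp only [Fintype.card_sigma, Fintype.card_fin, Fin.sum_univ_eq_sum_range (fun i => n i)]
    omega
end

section
/- For every integer r ≥ 3 and integers n₁ ≥ n₂ ≥ ⋯ ≥ n_r ≥ 1, the complete r-partite graph K_{n₁,n₂,…,n_r} contains a family of min{ ⌊(n₁+⋯+n_r)/3⌋, ⌊(n₂+⋯+n_r)/2⌋, n₃+⋯+n_r } pairwise vertex-disjoint triangles. -/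
open Finset

/-! The counting conditions `CountingBound` are necessary for `t` disjoint triangles in a complete
multipartite graph, and they are also sufficient: if they hold for `t + 1`, removing one vertex from
each of the three largest parts (a triangle) leaves part sizes satisfying them for `t`, by a case
analysis on how many of the parts involved are among those three. For part sizes sorted in
decreasing order the conditions say exactly that `t` is at most the stated minimum. -/

section CountingBound

variable {ι : Type*} [Fintype ι] [DecidableEq ι]

/-- The counting conditions that `t` disjoint triangles in a complete multipartite graph with part
sizes `m` must satisfy: `3t` vertices in all, two outside any part, one outside any two parts. -/
def CountingBound (m : ι → ℕ) (t : ℕ) : Prop :=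
  3 * t ≤ ∑ i, m i ∧ (∀ i, 2 * t + m i ≤ ∑ j, m j) ∧
    ∀ i j, i ≠ j → t + m i + m j ≤ ∑ k, m k

lemma exists_notMem_pos_of_sum_lt (m : ι → ℕ) (s : Finset ι) (h : ∑ i ∈ s, m i < ∑ i, m i) :
    ∃ j ∉ s, 0 < m j := by
  by_contra! hs
  exact h.ne (sum_subset (subset_univ s) fun j _ hj => Nat.eq_zero_of_le_zero (hs j hj))

lemma CountingBound.exists_top_three {m : ι → ℕ} {t : ℕ} (h : CountingBound m (t + 1)) :
    ∃ i₁ i₂ i₃, i₁ ≠ i₂ ∧ i₁ ≠ i₃ ∧ i₂ ≠ i₃ ∧ 0 < m i₃ ∧ (∀ j, m j ≤ m i₁) ∧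
      (∀ j, j ≠ i₁ → m j ≤ m i₂) ∧ ∀ j, j ≠ i₁ → j ≠ i₂ → m j ≤ m i₃ := by
  obtain ⟨hall, hone, htwo⟩ := h
  obtain ⟨j₁, -, -⟩ := exists_notMem_pos_of_sum_lt m ∅ (by simp; omega)
  obtain ⟨i₁, -, h₁⟩ := exists_max_image univ m ⟨j₁, mem_univ _⟩
  obtain ⟨j₂, hj₂, -⟩ := exists_notMem_pos_of_sum_lt m {i₁} (by simp; have := hone i₁; omega)
  obtain ⟨i₂, hi₂, h₂⟩ := exists_max_image {i₁}ᶜ m ⟨j₂, by simpa using hj₂⟩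
  have h₁₂ : i₁ ≠ i₂ := by simpa [eq_comm] using hi₂
  obtain ⟨j₃, hj₃, hj₃_pos⟩ := exists_notMem_pos_of_sum_lt m {i₁, i₂}
    (by rw [sum_pair h₁₂]; have := htwo i₁ i₂ h₁₂; omega)
  obtain ⟨i₃, hi₃, h₃⟩ := exists_max_image {i₁, i₂}ᶜ m ⟨j₃, by simpa using hj₃⟩
  simp only [mem_compl, mem_insert, mem_singleton, not_or] at hi₃ h₂ h₃ hj₃
  exact ⟨i₁, i₂, i₃, h₁₂, Ne.symm hi₃.1, Ne.symm hi₃.2, hj₃_pos.trans_le (h₃ j₃ hj₃),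
    fun j => h₁ j (mem_univ j), h₂, fun j hj₁ hj₂ => h₃ j ⟨hj₁, hj₂⟩⟩

lemma CountingBound.exists_three_sub_one {m : ι → ℕ} {t : ℕ} (h : CountingBound m (t + 1)) :
    ∃ S : Finset ι, #S = 3 ∧ (∀ i ∈ S, 0 < m i) ∧
      CountingBound (fun i => m i - if i ∈ S then 1 else 0) t := by
  obtain ⟨i₁, i₂, i₃, h₁₂, h₁₃, h₂₃, hpos, h₁, h₂, h₃⟩ := h.exists_top_three
  obtain ⟨hall, hone, htwo⟩ := h
  set S : Finset ι := {i₁, i₂, i₃}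
  have hS_sum : ∑ i ∈ S, m i = m i₁ + m i₂ + m i₃ := by
    rw [sum_insert (by simp [h₁₂, h₁₃]), sum_pair h₂₃, add_assoc]
  have hS_card : #S = 3 := by
    rw [card_insert_of_notMem (by simp [h₁₂, h₁₃]), card_pair h₂₃]
  have hS_pos : ∀ i ∈ S, 0 < m i := by
    have := h₂ i₃ h₁₃.symm
    have := h₁ i₂
    simp only [S, mem_insert, mem_singleton]
    rintro i (rfl | rfl | rfl) <;> omega
  have hsum : ∑ i, (m i - if i ∈ S then 1 else 0) + 3 = ∑ i, m i := by
    have hS_ones : ∑ i, (if i ∈ S then 1 else 0) = #S := by simp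
    rw [← hS_card, ← hS_ones, ← sum_add_distrib]
    refine sum_congr rfl fun i _ => Nat.sub_add_cancel ?_
    split_ifs with hi
    exacts [hS_pos i hi, Nat.zero_le _]
  have hcompl : ∀ i ∉ S, m i₁ + m i₂ + m i₃ + m i ≤ ∑ i, m i := by
    intro i hi
    rw [← hS_sum, ← sum_add_sum_compl S]
    exact Nat.add_le_add_left (single_le_sum (by simp) (mem_compl.2 hi)) _
  have hcompl₂ : ∀ i ∉ S, ∀ j ∉ S, i ≠ j → m i₁ + m i₂ + m i₃ + m i + m j ≤ ∑ k, m k := by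
    intro i hi j hj hij
    rw [← hS_sum, ← sum_add_sum_compl S, add_assoc]
    exact Nat.add_le_add_left (add_le_sum (by simp) (mem_compl.2 hi) (mem_compl.2 hj) hij) _
  have hparts : ∀ i, (i ∈ S ∧ m i ≤ m i₁) ∨ (i ∉ S ∧ m i ≤ m i₃) := by
    intro i
    by_cases hi : i ∈ S
    · exact .inl ⟨hi, h₁ i⟩
    · simp only [S, mem_insert, mem_singleton, not_or] at hi
      exact .inr ⟨by simp [S, hi.1, hi.2.1, hi.2.2], h₃ i hi.1 hi.2.1⟩
  have hone₁ := hone i₁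
  have htwo₁₂ := htwo i₁ i₂ h₁₂
  have h₃₂ := h₂ i₃ h₁₃.symm
  have h₂₁ := h₁ i₂
  refine ⟨S, hS_card, hS_pos, ?_, fun i => ?_, fun i j hij => ?_⟩ <;> dsimp only
  · omega
  · rcases hparts i with ⟨hi, -⟩ | ⟨hi, hi₃⟩
    · have := hone i
      simp only [if_pos hi]; omega
    · have := hcompl i hi
      simp only [if_neg hi]; omega
  · have := htwo i j hij
    rcases hparts i with ⟨hi, hi₁⟩ | ⟨hi, hi₃⟩ <;> rcases hparts j with ⟨hj, hj₁⟩ | ⟨hj, hj₃⟩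
    · simp only [if_pos hi, if_pos hj]; omega
    · have := hcompl j hj
      simp only [if_pos hi, if_neg hj]; omega
    · have := hcompl i hi
      simp only [if_neg hi, if_pos hj]; omega
    · have := hcompl₂ i hi j hj hij
      simp only [if_neg hi, if_neg hj]; omega

end CountingBound

section Packing

variable {V : Type*}

def HasDisjointTrianglesIn (G : SimpleGraph V) (A : Finset V) (t : ℕ) : Prop :=
  ∃ f : Fin t → Finset V, (∀ i, G.IsNClique 3 (f i) ∧ f i ⊆ A) ∧
    ∀ i j : Fin t, i ≠ j → Disjoint (f i) (f j)

lemma HasDisjointTrianglesIn.hasDisjointTriangles {G : SimpleGraph V} {A : Finset V} {t : ℕ}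
    (h : HasDisjointTrianglesIn G A t) : HasDisjointTriangles G t :=
  let ⟨f, hf, hdisj⟩ := h
  ⟨f, fun i => (hf i).1, hdisj⟩

lemma HasDisjointTrianglesIn.zero (G : SimpleGraph V) (A : Finset V) :
    HasDisjointTrianglesIn G A 0 :=
  ⟨Fin.elim0, fun i => i.elim0, fun i => i.elim0⟩

lemma HasDisjointTrianglesIn.succ_of_sdiff [DecidableEq V] {G : SimpleGraph V} {A s : Finset V}
    {t : ℕ} (hs : G.IsNClique 3 s) (hsA : s ⊆ A) (h : HasDisjointTrianglesIn G (A \ s) t) :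
    HasDisjointTrianglesIn G A (t + 1) := by
  obtain ⟨f, hf, hdisj⟩ := h
  have hs_disj : ∀ i, Disjoint s (f i) := fun i => disjoint_sdiff.mono_right (hf i).2
  refine ⟨Fin.cons s f, Fin.cases ⟨hs, hsA⟩ fun i => ⟨(hf i).1, (hf i).2.trans sdiff_subset⟩, ?_⟩
  intro i j hij
  cases i using Fin.cases <;> cases j using Fin.cases
  · exact absurd rfl hij
  · simpa using hs_disj _
  · simpa using (hs_disj _).symm
  · simpa using hdisj _ _ (fun h => hij (congrArg _ h))

end Packing

section Multipartite

variable {ι : Type*} {α : ι → Type*} [DecidableEq ι]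

def partSize (A : Finset (Σ i, α i)) (i : ι) : ℕ := #{v ∈ A | v.1 = i}

lemma partSize_univ [Fintype ι] [∀ i, Fintype (α i)] (i : ι) :
    partSize (univ : Finset (Σ i, α i)) i = Fintype.card (α i) := by
  rw [partSize, ← Fintype.card_subtype]
  exact Fintype.card_congr (Equiv.sigmaSubtype i)

lemma partSize_sdiff_add [∀ i, DecidableEq (α i)] {A u : Finset (Σ i, α i)} (h : u ⊆ A) (i : ι) :
    partSize (A \ u) i + partSize u i = partSize A i := by
  simp only [partSize, card_filter]
  exact sum_sdiff h

lemma partSize_eq_ite_of_injOn {u : Finset (Σ i, α i)}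
    (hu : Set.InjOn Sigma.fst (u : Set (Σ i, α i))) (i : ι) :
    partSize u i = if i ∈ u.image Sigma.fst then 1 else 0 := by
  split_ifs with hi
  · obtain ⟨v, hv, rfl⟩ := mem_image.1 hi
    refine card_eq_one.2 ⟨v, eq_singleton_iff_unique_mem.2 ⟨by simp [hv], fun w hw => ?_⟩⟩
    rw [mem_filter] at hw
    exact hu hw.1 hv hw.2
  · refine card_eq_zero.2 (filter_eq_empty_iff.2 fun v hv hvi => hi ?_)
    exact mem_image.2 ⟨v, hv, hvi⟩

lemma exists_isNClique_three_partSize_sdiff [∀ i, DecidableEq (α i)] {A : Finset (Σ i, α i)}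
    {S : Finset ι} (hS : #S = 3) (hSA : ∀ i ∈ S, 0 < partSize A i) :
    ∃ u ⊆ A, (SimpleGraph.completeMultipartiteGraph α).IsNClique 3 u ∧
      partSize (A \ u) = fun i => partSize A i - if i ∈ S then 1 else 0 := by
  have hsurj : Set.SurjOn Sigma.fst (A : Set (Σ i, α i)) S := by
    intro i hi
    obtain ⟨v, hv⟩ := card_pos.1 (hSA i hi)
    rw [mem_filter] at hv
    exact ⟨v, hv⟩
  obtain ⟨u, huA, hinj, himage⟩ := exists_subset_injOn_image_eq_of_surjOn _ _ hsurj
  refine ⟨u, huA, ⟨fun v hv w hw hvw => ?_, ?_⟩, funext fun i => ?_⟩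
  · simpa using fun h => hvw (hinj hv hw h)
  · rwa [← card_image_of_injOn hinj, himage]
  · have := partSize_sdiff_add (coe_subset.1 huA) i
    rw [partSize_eq_ite_of_injOn hinj, himage] at this
    omega

theorem hasDisjointTrianglesIn_of_countingBound [Fintype ι] [∀ i, DecidableEq (α i)] {t : ℕ}
    {A : Finset (Σ i, α i)}
    (h : CountingBound (partSize A) t) :
    HasDisjointTrianglesIn (SimpleGraph.completeMultipartiteGraph α) A t := by
  induction t generalizing A with
  | zero => exact .zero _ A
  | succ t ih =>
    obtain ⟨S, hS, hSA, h'⟩ := h.exists_three_sub_one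
    obtain ⟨u, huA, hu, hsize⟩ := exists_isNClique_three_partSize_sdiff hS hSA
    exact .succ_of_sdiff hu huA (ih (hsize ▸ h'))

end Multipartite

lemma countingBound_of_sorted {r : ℕ} {n : ℕ → ℕ}
    (hmono : ∀ i j : ℕ, i ≤ j → j < r → n j ≤ n i) :
    CountingBound (fun i : Fin r => n i)
      (min (min ((∑ i ∈ range r, n i) / 3) ((∑ i ∈ Ico 1 r, n i) / 2)) (∑ i ∈ Ico 2 r, n i)) := by
  rw [CountingBound, Fin.sum_univ_eq_sum_range]
  have hle₀ : ∀ i : Fin r, n i ≤ n 0 := fun i => hmono 0 i (Nat.zero_le _) i.isLt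
  have hle₁ : ∀ i : Fin r, 1 ≤ (i : ℕ) → n i ≤ n 1 := fun i hi => hmono 1 i hi i.isLt
  have hsplit₀ (h : 0 < r) : ∑ i ∈ range r, n i = n 0 + ∑ i ∈ Ico 1 r, n i := by
    rw [range_eq_Ico, sum_eq_sum_Ico_succ_bot h]
  have hsplit₁ (h : 1 < r) : ∑ i ∈ Ico 1 r, n i = n 1 + ∑ i ∈ Ico 2 r, n i :=
    sum_eq_sum_Ico_succ_bot h n
  refine ⟨by omega, fun i => ?_, fun i j hij => ?_⟩
  · have := hsplit₀ i.pos
    have := hle₀ i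
    omega
  · have hij' : (i : ℕ) ≠ j := Fin.val_ne_of_ne hij
    have := hsplit₀ i.pos
    have := hsplit₁ (by omega)
    have := hle₀ i
    have := hle₀ j
    have := hle₁ i
    have := hle₁ j
    omega

theorem disjoint_triangles_lower_bound_general (r : ℕ) (n : ℕ → ℕ)
    (hmono : ∀ i j : ℕ, i ≤ j → j < r → n j ≤ n i) :
    HasDisjointTriangles (Kpartite r n)
      (min (min ((∑ i ∈ Finset.range r, n i) / 3) ((∑ i ∈ Finset.Ico 1 r, n i) / 2))
        (∑ i ∈ Finset.Ico 2 r, n i)) := by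
  have hsize : partSize (univ : Finset ((i : Fin r) × Fin (n i))) = fun i : Fin r => n i :=
    funext fun i => (partSize_univ i).trans (Fintype.card_fin _)
  have hbound := countingBound_of_sorted hmono
  rw [← hsize] at hbound
  exact (hasDisjointTrianglesIn_of_countingBound hbound).hasDisjointTriangles

/-- `K_{n₁,…,n_r}` contains `min{⌊(n₁+⋯+n_r)/3⌋, ⌊(n₂+⋯+n_r)/2⌋, n₃+⋯+n_r}` pairwise
vertex-disjoint triangles. -/
theorem disjoint_triangles_lower_bound (r : ℕ) (n : ℕ → ℕ) (hr : 3 ≤ r)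
    (hmono : ∀ i j : ℕ, i ≤ j → j < r → n j ≤ n i)
    (hpos : ∀ i : ℕ, i < r → 1 ≤ n i) :
    HasDisjointTriangles (Kpartite r n)
      (min (min ((∑ i ∈ Finset.range r, n i) / 3) ((∑ i ∈ Finset.Ico 1 r, n i) / 2))
        (∑ i ∈ Finset.Ico 2 r, n i)) :=
  disjoint_triangles_lower_bound_general r n hmono
end

section
/- Let r ≥ 3, let c be an edge-coloring of the complete r-partite graph K_{n₁,n₂,…,n_r} with no rainbow 4-cycle, and suppose that for every vertex v at least 2 colors are starred at v. Then for any vertex x, if c(xy) and c(xz) are two distinct colors starred at x, then y and z lie in different parts of K_{n₁,n₂,…,n_r}. -/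
open Finset

/-- The color `a` is starred at `x` under the coloring `c`: every edge of `G` with color
`a` is incident to `x` (so the edges of color `a` form a star centered at `x`). -/
def Starred {V α : Type*} (G : SimpleGraph V) (c : Sym2 V → α) (a : α) (x : V) : Prop :=
  ∀ e ∈ G.edgeSet, c e = a → x ∈ e

/-- The set of colors that appear on some edge of `G` and are starred at `v`. -/
def starredColors {V α : Type*} (G : SimpleGraph V) (c : Sym2 V → α) (v : V) : Set α :=
  {a : α | (∃ e ∈ G.edgeSet, c e = a) ∧ Starred G c a v}

/-- In a coloring of `K_{n₁,…,n_r}` with no rainbow `C₄` in which at least two colors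
are starred at every vertex: if `c(xy)` and `c(xz)` are distinct colors starred at `x`,
then `y` and `z` lie in different parts. -/
theorem starred_colors_different_parts (r : ℕ) (n : ℕ → ℕ) (hr : 3 ≤ r)
    {α : Type*} (c : Sym2 ((i : Fin r) × Fin (n i)) → α)
    (hnr : ¬ RainbowC4 (Kpartite r n) c)
    (hstar : ∀ v : (i : Fin r) × Fin (n i), ∃ a b : α, a ≠ b ∧
      a ∈ starredColors (Kpartite r n) c v ∧ b ∈ starredColors (Kpartite r n) c v)
    (x y z : (i : Fin r) × Fin (n i))
    (hxy : (Kpartite r n).Adj x y) (hxz : (Kpartite r n).Adj x z)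
    (hne : c s(x, y) ≠ c s(x, z))
    (hsy : Starred (Kpartite r n) c (c s(x, y)) x)
    (hsz : Starred (Kpartite r n) c (c s(x, z)) x) :
    y.1 ≠ z.1 := by
  intro hyz
  apply hnr
  -- basic non-equalities
  have hyne : y ≠ z := fun h => hne (by rw [h])
  have hxy1 : x.1 ≠ y.1 := hxy
  have hxz1 : x.1 ≠ z.1 := hxz
  have hxney : x ≠ y := fun h => hxy1 (by rw [h])
  have hxnez : x ≠ z := fun h => hxz1 (by rw [h])
  -- get a color d starred at z, d ≠ c s(x,z)
  obtain ⟨a', b', hab, ⟨⟨ea, hea, hca⟩, hsa⟩, ⟨⟨eb, heb, hcb⟩, hsb⟩⟩ := hstar z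
  have hd : ∃ d, (∃ e ∈ (Kpartite r n).edgeSet, c e = d) ∧
      Starred (Kpartite r n) c d z ∧ d ≠ c s(x, z) := by
    rcases eq_or_ne a' (c s(x, z)) with h | h
    · exact ⟨b', ⟨eb, heb, hcb⟩, hsb, fun hb => hab (h.trans hb.symm)⟩
    · exact ⟨a', ⟨ea, hea, hca⟩, hsa, h⟩
  obtain ⟨d, ⟨e, he, hce⟩, hsd, hdz⟩ := hd
  have hze : z ∈ e := hsd e he hce
  obtain ⟨w, rfl⟩ := Sym2.mem_iff_exists.mp hze
  have hzw : (Kpartite r n).Adj z w := (SimpleGraph.mem_edgeSet _).mp he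
  have hzw1 : z.1 ≠ w.1 := hzw
  have hwnex : w ≠ x := by
    rintro rfl
    rw [Sym2.eq_swap] at hce
    exact hdz hce.symm
  have hwney : w ≠ y := fun h => hzw1 (by rw [h, hyz])
  have hwy : (Kpartite r n).Adj w y := fun h => hzw1 (hyz ▸ h.symm)
  have hwyE : s(w, y) ∈ (Kpartite r n).edgeSet := hwy
  have hznew : z ≠ w := fun h => hzw1 (by rw [h])
  -- color facts
  have h1 : c s(w, y) ≠ c s(x, y) := by
    intro h
    have := hsy s(w, y) hwyE h
    simp only [Sym2.mem_iff] at this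
    rcases this with h' | h' <;> [exact hwnex h'.symm; exact hxney h']
  have h2 : c s(w, y) ≠ c s(x, z) := by
    intro h
    have := hsz s(w, y) hwyE h
    simp only [Sym2.mem_iff] at this
    rcases this with h' | h' <;> [exact hwnex h'.symm; exact hxney h']
  have h3 : c s(w, y) ≠ d := by
    intro h
    have := hsd s(w, y) hwyE h
    simp only [Sym2.mem_iff] at this
    rcases this with h' | h' <;> [exact hznew h'; exact hyne h'.symm]
  have h4 : d ≠ c s(x, y) := by
    intro h
    have := hsy s(z, w) he (hce.trans h)
    simp only [Sym2.mem_iff] at this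
    rcases this with h' | h' <;> [exact hxnez h'; exact hwnex h'.symm]
  -- build the rainbow C4 : y - x - z - w - y
  refine ⟨y, x, z, w, hxy.symm, hxz, hzw, hwy, hyne, hwnex.symm, ?_, ?_, ?_, ?_, ?_, ?_⟩
  · rwa [Sym2.eq_swap]
  · rw [Sym2.eq_swap, hce]; exact fun h => h4 h.symm
  · rw [Sym2.eq_swap (a := y) (b := x)]
    exact fun h => h1 h.symm
  · rw [hce]; exact hdz.symm
  · exact fun h => h2 h.symm
  · rw [hce]; exact fun h => h3 h.symm
end

section
/- Let r ≥ 3, let c be an edge-coloring of the complete r-partite graph K_{n₁,n₂,…,n_r} with no rainbow 4-cycle, and suppose that for every vertex v at least 2 colors are starred at v. Then for any vertex x and any vertex y, if the color c(xy) is starred at x, then xy is the unique edge with color c(xy). -/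
open Finset

/-- Key lemma: if `a ≠ p` are both starred at `x₀`, with edges `x₀y₀` of color `a` and
`x₀t₀` of color `p`, then any `s₀` adjacent to both `t₀` and `y₀` (with `s₀ ≠ x₀`,
`y₀ ≠ t₀`) satisfies `c(t₀s₀) = c(s₀y₀)`, else `(y₀, x₀, t₀, s₀)` is a rainbow `C₄`. -/
theorem lemM_aux {V α : Type*} (G : SimpleGraph V) (c : Sym2 V → α)
    (hnr : ¬ RainbowC4 G c) (x₀ y₀ t₀ s₀ : V) (a₀ p₀ : α)
    (h1 : G.Adj x₀ y₀) (h2 : G.Adj x₀ t₀) (h3 : G.Adj t₀ s₀) (h4 : G.Adj s₀ y₀)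
    (hyt0 : y₀ ≠ t₀) (hxs0 : x₀ ≠ s₀)
    (hsa : Starred G c a₀ x₀) (hsp : Starred G c p₀ x₀) (hap : a₀ ≠ p₀)
    (hc1 : c s(x₀, y₀) = a₀) (hc2 : c s(x₀, t₀) = p₀) :
    c s(t₀, s₀) = c s(s₀, y₀) := by
  by_contra hne
  apply hnr
  have e1 : c s(y₀, x₀) = a₀ := by rw [Sym2.eq_swap]; exact hc1
  refine ⟨y₀, x₀, t₀, s₀, h1.symm, h2, h3, h4, hyt0, hxs0, ?_, ?_, ?_, ?_, ?_, hne⟩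
  · rw [e1, hc2]; exact hap
  · rw [e1]
    intro h
    have hx : x₀ ∈ s(t₀, s₀) := hsa _ (G.mem_edgeSet.mpr h3) h.symm
    rcases Sym2.mem_iff.mp hx with h' | h'
    · exact h2.ne h'
    · exact hxs0 h'
  · rw [e1]
    intro h
    have hx : x₀ ∈ s(s₀, y₀) := hsa _ (G.mem_edgeSet.mpr h4) h.symm
    rcases Sym2.mem_iff.mp hx with h' | h'
    · exact hxs0 h'
    · exact h1.ne h'
  · rw [hc2]
    intro h
    have hx : x₀ ∈ s(t₀, s₀) := hsp _ (G.mem_edgeSet.mpr h3) h.symm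
    rcases Sym2.mem_iff.mp hx with h' | h'
    · exact h2.ne h'
    · exact hxs0 h'
  · rw [hc2]
    intro h
    have hx : x₀ ∈ s(s₀, y₀) := hsp _ (G.mem_edgeSet.mpr h4) h.symm
    rcases Sym2.mem_iff.mp hx with h' | h'
    · exact hxs0 h'
    · exact h1.ne h'

/-- In a coloring of `K_{n₁,…,n_r}` with no rainbow `C₄` in which at least two colors
are starred at every vertex: if `c(xy)` is starred at `x`, then `xy` is the unique edge
with color `c(xy)`. -/
theorem starred_color_unique_edge (r : ℕ) (n : ℕ → ℕ) (hr : 3 ≤ r)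
    {α : Type*} (c : Sym2 ((i : Fin r) × Fin (n i)) → α)
    (hnr : ¬ RainbowC4 (Kpartite r n) c)
    (hstar : ∀ v : (i : Fin r) × Fin (n i), ∃ a b : α, a ≠ b ∧
      a ∈ starredColors (Kpartite r n) c v ∧ b ∈ starredColors (Kpartite r n) c v)
    (x y : (i : Fin r) × Fin (n i)) (hxy : (Kpartite r n).Adj x y)
    (hsy : Starred (Kpartite r n) c (c s(x, y)) x) :
    ∀ e ∈ (Kpartite r n).edgeSet, c e = c s(x, y) → e = s(x, y) := by
  classical
  set G := Kpartite r n with hG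
  -- adjacency in the complete multipartite graph
  have adjI : ∀ u v : (i : Fin r) × Fin (n i), u.1 ≠ v.1 → G.Adj u v := fun u v h => h
  have adjE : ∀ u v : (i : Fin r) × Fin (n i), G.Adj u v → u.1 ≠ v.1 := fun u v h => h
  intro e he hce
  have hxe : x ∈ e := hsy e he hce
  obtain ⟨z, rfl⟩ := Sym2.mem_iff_exists.mp hxe
  have hxz : G.Adj x z := G.mem_edgeSet.mp he
  rcases eq_or_ne z y with rfl | hzy
  · rfl
  exfalso
  -- helper to extract an edge of a starred color
  have extract : ∀ (v : (i : Fin r) × Fin (n i)) (q : α), q ∈ starredColors G c v →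
      ∃ u, G.Adj v u ∧ c s(v, u) = q := by
    intro v q hq
    obtain ⟨⟨e₀, he₀, hc₀⟩, hs₀⟩ := hq
    have hv : v ∈ e₀ := hs₀ e₀ he₀ hc₀
    obtain ⟨u, rfl⟩ := Sym2.mem_iff_exists.mp hv
    exact ⟨u, G.mem_edgeSet.mp he₀, hc₀⟩
  -- the color a := c s(x,y) is not starred at y (it has the second edge xz)
  have hay : ¬ Starred G c (c s(x, y)) y := by
    intro h
    have hy : y ∈ s(x, z) := h (s(x, z)) he hce
    rcases Sym2.mem_iff.mp hy with h1 | h1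
    · exact hxy.ne' h1
    · exact hzy h1.symm
  -- choose a starred color p ≠ a at x, with its edge x t
  obtain ⟨p₁, p₂, hp12, hp1, hp2⟩ := hstar x
  have hpex : ∃ p t, p ≠ c s(x, y) ∧ Starred G c p x ∧ G.Adj x t ∧ c s(x, t) = p := by
    rcases eq_or_ne p₁ (c s(x, y)) with h | h
    · obtain ⟨t, ht, hct⟩ := extract x p₂ hp2
      exact ⟨p₂, t, by rw [← h]; exact hp12.symm, hp2.2, ht, hct⟩
    · obtain ⟨t, ht, hct⟩ := extract x p₁ hp1
      exact ⟨p₁, t, h, hp1.2, ht, hct⟩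
  obtain ⟨p, t, hpa, hps, hxt, hct⟩ := hpex
  have hyt : y ≠ t := by
    rintro rfl
    exact hpa hct.symm
  -- every edge at y whose color is starred at y lands in the part of t
  have claim3 : ∀ (q : α) (w : (i : Fin r) × Fin (n i)),
      Starred G c q y → G.Adj y w → c s(y, w) = q → w.1 = t.1 := by
    intro q w hqy hyw hcw
    have hwx : w ≠ x := by
      intro hwxeq
      apply hay
      have hq : q = c s(x, y) := by rw [← hcw, hwxeq, Sym2.eq_swap]
      rwa [hq] at hqy
    by_contra hne
    have htw : G.Adj t w := adjI _ _ fun h => hne h.symm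
    have hkey := lemM_aux G c hnr x y t w (c s(x, y)) p hxy hxt htw hyw.symm hyt
      hwx.symm hsy hps (Ne.symm hpa) rfl hct
    have hmem : y ∈ s(t, w) := by
      apply hqy _ (G.mem_edgeSet.mpr htw)
      rw [hkey, Sym2.eq_swap, hcw]
    rcases Sym2.mem_iff.mp hmem with h | h
    · exact hyt h
    · exact hyw.ne h
  -- the two starred colors at y give two edges into the part of t
  obtain ⟨b₁, b₂, hb12, hb1, hb2⟩ := hstar y
  obtain ⟨w₁, hyw₁, hcw₁⟩ := extract y b₁ hb1
  obtain ⟨w₂, hyw₂, hcw₂⟩ := extract y b₂ hb2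
  have hw12 : w₁ ≠ w₂ := by
    rintro rfl
    exact hb12 (by rw [← hcw₁, ← hcw₂])
  have hT1 : w₁.1 = t.1 := claim3 b₁ w₁ hb1.2 hyw₁ hcw₁
  have hT2 : w₂.1 = t.1 := claim3 b₂ w₂ hb2.2 hyw₂ hcw₂
  -- a starred color at w₁ with an edge avoiding y
  obtain ⟨f₁, f₂, hf12, hf1, hf2⟩ := hstar w₁
  obtain ⟨s₁, hws₁, hcs₁⟩ := extract w₁ f₁ hf1
  obtain ⟨s₂, hws₂, hcs₂⟩ := extract w₁ f₂ hf2
  have hs12 : s₁ ≠ s₂ := by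
    rintro rfl
    exact hf12 (by rw [← hcs₁, ← hcs₂])
  have hpick : ∃ f s', Starred G c f w₁ ∧ G.Adj w₁ s' ∧ c s(w₁, s') = f ∧ s' ≠ y := by
    rcases eq_or_ne s₁ y with rfl | h
    · exact ⟨f₂, s₂, hf2.2, hws₂, hcs₂, Ne.symm hs12⟩
    · exact ⟨f₁, s₁, hf1.2, hws₁, hcs₁, h⟩
  obtain ⟨f, s', hfs, hws, hcs, hsy'⟩ := hpick
  -- s' is outside the part of t, hence adjacent to w₂
  have hst' : G.Adj w₂ s' := by
    apply adjI
    rw [hT2, ← hT1]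
    exact adjE _ _ hws
  -- final application of the key lemma, centered at y
  have hkey := lemM_aux G c hnr y w₁ w₂ s' b₁ b₂ hyw₁ hyw₂ hst' hws.symm hw12
    (Ne.symm hsy') hb1.2 hb2.2 hb12 hcw₁ hcw₂
  have hmem : w₁ ∈ s(w₂, s') := by
    apply hfs _ (G.mem_edgeSet.mpr hst')
    rw [hkey, Sym2.eq_swap, hcs]
  rcases Sym2.mem_iff.mp hmem with h | h
  · exact hw12 h
  · exact hws.ne h
end

section
/- Let r ≥ 3, let c be an edge-coloring of the complete r-partite graph K_{n₁,n₂,…,n_r} with no rainbow 4-cycle, and suppose that for every vertex v at least 2 colors are starred at v. Then for every vertex x, exactly 2 colors are starred at x, i.e., dᶜ(x) = 2. -/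
open Finset

/-!
Let `a₁, a₂, a₃` be distinct colors starred at `x`, on edges `xu₁, xu₂, xu₃`. A color `β` starred
at `uᵢ` and different from `aᵢ` sits on an edge `uᵢy`, and it differs from every `aⱼ` (as `aⱼ` is
starred at `x`). If `y` were adjacent to `uⱼ` (`j ≠ i`), the cycle `y uᵢ x uⱼ` would be rainbow:
the color of `yuⱼ` avoids `aᵢ`, `aⱼ` and `β` because their stars miss that edge. Hence `y` lies in
the part of every `uⱼ`, `j ≠ i`. Doing this at `u₁` and `u₂` puts `u₁, y₂, u₃, y₁` in one part,
although `y₁` is a neighbour of `u₁`.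
-/

lemma Starred.eq_or_eq {V α : Type*} {G : SimpleGraph V} {c : Sym2 V → α} {a : α} {x u v : V}
    (h : Starred G c a x) (huv : G.Adj u v) (hc : c s(u, v) = a) : x = u ∨ x = v :=
  Sym2.mem_iff.mp (h _ huv hc)

namespace SimpleGraph

variable {V α : Type*} {G : SimpleGraph V} {c : Sym2 V → α}

lemma exists_adj_of_mem_starredColors {a : α} {v : V} (h : a ∈ starredColors G c v) :
    ∃ u, G.Adj v u ∧ c s(v, u) = a := by
  obtain ⟨⟨e, he, hce⟩, hs⟩ := h
  induction e using Sym2.inductionOn with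
  | hf p q =>
    rcases Sym2.mem_iff.mp (hs _ he hce) with rfl | rfl
    · exact ⟨q, he, hce⟩
    · exact ⟨p, he.symm, by rwa [Sym2.eq_swap]⟩

lemma not_adj_of_not_rainbowC4 (hnr : ¬ RainbowC4 G c) {x u v w : V}
    (hxu : G.Adj x u) (hxv : G.Adj x v) (huw : G.Adj u w)
    (hsu : Starred G c (c s(x, u)) x) (hsv : Starred G c (c s(x, v)) x)
    (hsw : Starred G c (c s(u, w)) u) (huv : c s(x, u) ≠ c s(x, v))
    (hwu : c s(u, w) ≠ c s(x, u)) (hwv : c s(u, w) ≠ c s(x, v)) : ¬ G.Adj w v := by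
  intro hadj
  have hxw : x ≠ w := by rintro rfl; exact hwu (by rw [Sym2.eq_swap])
  have hne : u ≠ v := by rintro rfl; exact huv rfl
  have hvx : c s(v, x) = c s(x, v) := by rw [Sym2.eq_swap]
  -- the color of the fourth edge `wv` is none of the other three: their stars miss `wv`
  have hwv_ne {a : V} {b : α} (hs : Starred G c b a) (haw : a ≠ w) (hav : a ≠ v) :
      c s(w, v) ≠ b := fun h => (Starred.eq_or_eq hs hadj h).elim haw hav
  refine hnr ⟨x, u, w, v, hxu, huw, hadj, hxv.symm, hxw, hne, hwu.symm, ?_, ?_, ?_, ?_, ?_⟩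
  · exact (hwv_ne hsu hxw hxv.ne).symm
  · rw [hvx]; exact huv
  · exact (hwv_ne hsw huw.ne hne).symm
  · rw [hvx]; exact hwv
  · rw [hvx]; exact hwv_ne hsv hxw hxv.ne

lemma exists_adj_forall_not_adj (hnr : ¬ RainbowC4 G c) {x u : V}
    (hu : ∃ a b : α, a ≠ b ∧ a ∈ starredColors G c u ∧ b ∈ starredColors G c u)
    (hxu : G.Adj x u) (hsu : Starred G c (c s(x, u)) x) :
    ∃ y, G.Adj u y ∧ ∀ v, G.Adj x v → Starred G c (c s(x, v)) x →
      c s(x, u) ≠ c s(x, v) → ¬ G.Adj y v := by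
  obtain ⟨β, hβ, hβu⟩ : ∃ β ∈ starredColors G c u, β ≠ c s(x, u) := by
    obtain ⟨a, b, hab, ha, hb⟩ := hu
    by_cases h : a = c s(x, u)
    · exact ⟨b, hb, h ▸ hab.symm⟩
    · exact ⟨a, ha, h⟩
  obtain ⟨y, huy, rfl⟩ := exists_adj_of_mem_starredColors hβ
  refine ⟨y, huy, fun v hxv hsv huv => ?_⟩
  have hyv : c s(u, y) ≠ c s(x, v) := fun h =>
    (Starred.eq_or_eq hβ.2 hxv h.symm).elim hxu.ne' (by rintro rfl; exact huv rfl)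
  exact not_adj_of_not_rainbowC4 hnr hxu hxv huy hsu hsv hβ.2 huv hβu hyv

theorem IsCompleteMultipartite.starredColors_subset_pair (hG : G.IsCompleteMultipartite)
    (hnr : ¬ RainbowC4 G c)
    (hstar : ∀ v, ∃ a b : α, a ≠ b ∧ a ∈ starredColors G c v ∧ b ∈ starredColors G c v)
    {x : V} {a₁ a₂ : α} (h₁₂ : a₁ ≠ a₂) (ha₁ : a₁ ∈ starredColors G c x)
    (ha₂ : a₂ ∈ starredColors G c x) : starredColors G c x ⊆ {a₁, a₂} := by
  intro a₃ ha₃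
  by_contra h
  simp only [Set.mem_insert_iff, Set.mem_singleton_iff, not_or] at h
  obtain ⟨u₁, hxu₁, rfl⟩ := exists_adj_of_mem_starredColors ha₁
  obtain ⟨u₂, hxu₂, rfl⟩ := exists_adj_of_mem_starredColors ha₂
  obtain ⟨u₃, hxu₃, rfl⟩ := exists_adj_of_mem_starredColors ha₃
  obtain ⟨y₁, hu₁y₁, hy₁⟩ := exists_adj_forall_not_adj hnr (hstar u₁) hxu₁ ha₁.2
  obtain ⟨y₂, -, hy₂⟩ := exists_adj_forall_not_adj hnr (hstar u₂) hxu₂ ha₂.2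
  have hu₁y₂ : ¬ G.Adj u₁ y₂ := fun h' => hy₂ u₁ hxu₁ ha₁.2 h₁₂.symm h'.symm
  have hy₂u₃ : ¬ G.Adj y₂ u₃ := hy₂ u₃ hxu₃ ha₃.2 (Ne.symm h.2)
  have hu₃y₁ : ¬ G.Adj u₃ y₁ := fun h' => hy₁ u₃ hxu₃ ha₃.2 (Ne.symm h.1) h'.symm
  exact hG.trans _ _ _ (hG.trans _ _ _ hu₁y₂ hy₂u₃) hu₃y₁ hu₁y₁

end SimpleGraph

theorem starred_degree_eq_two_general (r : ℕ) (n : ℕ → ℕ)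
    {α : Type*} (c : Sym2 ((i : Fin r) × Fin (n i)) → α)
    (hnr : ¬ RainbowC4 (Kpartite r n) c)
    (hstar : ∀ v : (i : Fin r) × Fin (n i), ∃ a b : α, a ≠ b ∧
      a ∈ starredColors (Kpartite r n) c v ∧ b ∈ starredColors (Kpartite r n) c v)
    (x : (i : Fin r) × Fin (n i)) :
    (starredColors (Kpartite r n) c x).ncard = 2 := by
  obtain ⟨a, b, hab, ha, hb⟩ := hstar x
  have hG : (Kpartite r n).IsCompleteMultipartite :=
    SimpleGraph.completeMultipartiteGraph.isCompleteMultipartite _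
  have hpair : starredColors (Kpartite r n) c x = {a, b} :=
    (hG.starredColors_subset_pair hnr hstar hab ha hb).antisymm
      (Set.insert_subset ha (Set.singleton_subset_iff.mpr hb))
  rw [hpair, Set.ncard_pair hab]

/-- In a coloring of `K_{n₁,…,n_r}` with no rainbow `C₄` in which at least two colors
are starred at every vertex, exactly two colors are starred at every vertex. -/
theorem starred_degree_eq_two (r : ℕ) (n : ℕ → ℕ) (hr : 3 ≤ r)
    {α : Type*} (c : Sym2 ((i : Fin r) × Fin (n i)) → α)
    (hnr : ¬ RainbowC4 (Kpartite r n) c)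
    (hstar : ∀ v : (i : Fin r) × Fin (n i), ∃ a b : α, a ≠ b ∧
      a ∈ starredColors (Kpartite r n) c v ∧ b ∈ starredColors (Kpartite r n) c v)
    (x : (i : Fin r) × Fin (n i)) :
    (starredColors (Kpartite r n) c x).ncard = 2 :=
  starred_degree_eq_two_general r n c hnr hstar x
end
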